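/- arXiv:1402.4535 — 3 statements merged into one kernel-verified Lean document; each statement's English description precedes it below -/
import Mathlib

section
/- There exists a universal constant c > 0 such that for every integer m ≥ 2, every real H ≥ 2, every ε ∈ (0, 1/2), and every probability distribution D supported on [1, H]^m, there exists a menu M with at most ((log₂ H + log₂ m + log₂(1/ε)) / ε)^{c·m} entries such that Rev_D(M) ≥ (1 − ε) · OPT(D). -/
open MeasureTheory

/-- An entry of a menu: a lottery (vector of allocation probabilities) together with a price. -/
abbrev Entry (m : ℕ) := (Fin m → ℝ) × ℝ

/-- A lottery: nonnegative coordinates summing to at most 1. -/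
def IsLottery (m : ℕ) (x : Fin m → ℝ) : Prop := (∀ j, 0 ≤ x j) ∧ ∑ j, x j ≤ 1

/-- A menu: a finite set of entries containing the null entry `(0, 0)`,
all of whose entries are lotteries. -/
def IsMenu (m : ℕ) (M : Finset (Entry m)) : Prop :=
  (0, 0) ∈ M ∧ ∀ e ∈ M, IsLottery m e.1

/-- Utility of entry `e` for a buyer with valuation `v`. -/
def utility {m : ℕ} (v : Fin m → ℝ) (e : Entry m) : ℝ := (∑ j, v j * e.1 j) - e.2

/-- A selection rule for menu `M`: picks, for each valuation, a utility-maximizing entry of `M`. -/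
def IsSelection {m : ℕ} (M : Finset (Entry m)) (s : (Fin m → ℝ) → Entry m) : Prop :=
  ∀ v, s v ∈ M ∧ ∀ e ∈ M, utility v e ≤ utility v (s v)

/-- Revenue of a selection rule `s` under distribution `D`: expected price paid. -/
noncomputable def revSel {m : ℕ} (D : Measure (Fin m → ℝ))
    (s : (Fin m → ℝ) → Entry m) : ℝ :=
  ∫ v, (s v).2 ∂D

/-- Revenue of menu `M` under distribution `D`: supremum over selection rules. -/
noncomputable def Rev {m : ℕ} (D : Measure (Fin m → ℝ)) (M : Finset (Entry m)) : ℝ :=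
  sSup {r | ∃ s, IsSelection M s ∧ r = revSel D s}

/-- Optimal revenue for a distribution `D`: supremum over all menus. -/
noncomputable def OPT {m : ℕ} (D : Measure (Fin m → ℝ)) : ℝ :=
  sSup {r | ∃ M : Finset (Entry m), IsMenu m M ∧ r = Rev D M}

/-!
Nudge and round. Since posting the price `1/2` on every item always sells, `OPT ≥ 1/2`, so
additive losses can be charged to `ε · OPT`. Take a menu with a selection earning more than
`OPT - ε/8`, and round each entry `(x, p)` with `p ≤ H`: every `x j` down to the geometric grid
`{(1+τ)^(k-K)}`, and the discounted price `(1 - η) p` down to the grid `{τ (1+τ)^k}`. Only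
`(K+2)^(m+1)` entries can arise. Because costlier entries receive larger discounts, rounding
cannot make a buyer drift to a much cheaper entry: one who paid `p` for an allocation worth `X`
now pays at least `(1 - 3η) p - (τ/η) (X + 3)`.

The loss is controlled by `X ≤ maxⱼ vⱼ` and `E[maxⱼ vⱼ] = O(log H) · OPT`: posting the price `2^k`
on every item earns `2^k · P(maxⱼ vⱼ > 2^k)`, and there are only `⌈log₂ H⌉` dyadic levels. With
`η = ε/6` and `τ = η² / (8 log₂ H)` the grid size is `K = ⌈1/τ⌉ ⌈log₂(mH/τ)⌉`, which is
`O(((log₂ H + log₂ m + log₂(1/ε)) / ε)²)`.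
-/

open Finset

section Rounding

variable {F : Finset ℝ} {y z : ℝ}

noncomputable def roundDown (F : Finset ℝ) (y : ℝ) : ℝ :=
  (insert 0 (F.filter (· ≤ y))).max' (insert_nonempty _ _)

theorem roundDown_mem (h0 : (0 : ℝ) ∈ F) : roundDown F y ∈ F := by
  have := max'_mem (insert 0 (F.filter (· ≤ y))) (insert_nonempty _ _)
  rcases mem_insert.1 this with h | h
  · exact (show roundDown F y = 0 from h) ▸ h0
  · exact (mem_filter.1 h).1

theorem roundDown_nonneg : 0 ≤ roundDown F y :=
  le_max' _ _ (mem_insert_self _ _)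

theorem roundDown_le (hy : 0 ≤ y) : roundDown F y ≤ y :=
  max'_le _ _ _ fun z hz => by
    rcases mem_insert.1 hz with rfl | hz
    · exact hy
    · exact (mem_filter.1 hz).2

theorem le_roundDown (hz : z ∈ F) (hzy : z ≤ y) : z ≤ roundDown F y :=
  le_max' _ _ (mem_insert_of_mem (mem_filter.2 ⟨hz, hzy⟩))

theorem roundDown_zero : roundDown F 0 = 0 :=
  le_antisymm (roundDown_le le_rfl) roundDown_nonneg

noncomputable def geomGrid (a r : ℝ) (K : ℕ) : Finset ℝ :=
  insert 0 ((range (K + 1)).image fun k => a * r ^ k)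

theorem zero_mem_geomGrid (a r : ℝ) (K : ℕ) : (0 : ℝ) ∈ geomGrid a r K :=
  mem_insert_self _ _

theorem card_geomGrid_le (a r : ℝ) (K : ℕ) : (geomGrid a r K).card ≤ K + 2 :=
  (card_insert_le _ _).trans (by simpa using card_image_le (s := range (K + 1)))

theorem div_sub_le_roundDown_geomGrid {a r : ℝ} {K : ℕ} (ha : 0 < a) (hr : 1 < r)
    (hy : y ≤ a * r ^ K) : y / r - a ≤ roundDown (geomGrid a r K) y := by
  rcases lt_or_ge y a with hya | hay
  · have : y / r < a := by
      rcases le_total y 0 with h | h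
      · exact (div_nonpos_of_nonpos_of_nonneg h (by linarith)).trans_lt ha
      · exact (div_le_self h hr.le).trans_lt hya
    linarith [roundDown_nonneg (F := geomGrid a r K) (y := y)]
  · obtain ⟨n, hn, hn1⟩ := exists_nat_pow_near ((one_le_div ha).2 hay) hr
    have hnK : n ≤ K := (pow_le_pow_iff_right₀ hr).1 <|
      hn.trans ((div_le_iff₀' ha).2 hy)
    have hmem : a * r ^ n ∈ geomGrid a r K :=
      mem_insert_of_mem (mem_image.2 ⟨n, mem_range.2 (by omega), rfl⟩)
    have hlow : y / r ≤ a * r ^ n := by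
      rw [div_le_iff₀ (by linarith), mul_assoc, ← pow_succ]
      exact ((div_lt_iff₀' ha).1 hn1).le
    linarith [le_roundDown hmem ((le_div_iff₀' ha).1 hn)]

end Rounding

section Selection

variable {m : ℕ}

theorem utility_zero (v : Fin m → ℝ) : utility v ((0, 0) : Entry m) = 0 := by
  simp [utility]

theorem measurable_utility_comp {s : (Fin m → ℝ) → Entry m} (hs : Measurable s) :
    Measurable fun v => utility v (s v) := by
  unfold utility
  fun_prop

theorem exists_measurable_isSelection {M : Finset (Entry m)} (hM : M.Nonempty) :
    ∃ s, IsSelection M s ∧ Measurable s := by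
  induction hM using Finset.Nonempty.cons_induction with
  | singleton a =>
    exact ⟨fun _ => a, fun v => ⟨mem_singleton_self a, by simp⟩, measurable_const⟩
  | cons a M _ _ ih =>
    obtain ⟨s, hs, hsm⟩ := ih
    refine ⟨fun v => if utility v (s v) < utility v a then a else s v, fun v => ?_, ?_⟩
    · simp only [cons_eq_insert, mem_insert, forall_eq_or_imp]
      split_ifs with h
      · exact ⟨.inl rfl, le_rfl, fun e he => ((hs v).2 e he).trans h.le⟩
      · exact ⟨.inr (hs v).1, not_lt.1 h, (hs v).2⟩
    · exact Measurable.ite (measurableSet_lt (measurable_utility_comp hsm)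
        (measurable_utility_comp measurable_const)) measurable_const hsm

theorem IsMenu.nonempty {M : Finset (Entry m)} (hM : IsMenu m M) : M.Nonempty :=
  ⟨_, hM.1⟩

theorem price_le_value {M : Finset (Entry m)} {s : (Fin m → ℝ) → Entry m}
    (hM : IsMenu m M) (hs : IsSelection M s) (v : Fin m → ℝ) :
    (s v).2 ≤ ∑ j, v j * (s v).1 j := by
  have := (hs v).2 _ hM.1
  rw [utility_zero, utility] at this
  linarith

theorem IsLottery.value_le {x v : Fin m → ℝ} {t : ℝ} (hx : IsLottery m x) (ht : 0 ≤ t)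
    (hv : ∀ j, v j ≤ t) : ∑ j, v j * x j ≤ t :=
  calc ∑ j, v j * x j ≤ ∑ j, t * x j :=
        sum_le_sum fun j _ => mul_le_mul_of_nonneg_right (hv j) (hx.1 j)
    _ = t * ∑ j, x j := (mul_sum _ _ _).symm
    _ ≤ t := mul_le_of_le_one_right ht hx.2

theorem IsLottery.value_nonneg {x v : Fin m → ℝ} (hx : IsLottery m x) (hv : ∀ j, 0 ≤ v j) :
    0 ≤ ∑ j, v j * x j :=
  sum_nonneg fun j _ => mul_nonneg (hv j) (hx.1 j)

end Selection

section RevenueBounds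

variable {m : ℕ} {D : Measure (Fin m → ℝ)} [IsProbabilityMeasure D]
  {M : Finset (Entry m)} {s : (Fin m → ℝ) → Entry m}

-- `0 ≤ C` covers the junk value `0` of the integral of a non-integrable price.
theorem revSel_le_of_ae_le {C : ℝ} (hC : 0 ≤ C) (h : ∀ᵐ v ∂D, (s v).2 ≤ C) :
    revSel D s ≤ C := by
  by_cases hint : Integrable (fun v => (s v).2) D
  · simpa [revSel] using integral_mono_ae hint (integrable_const C) h
  · rw [revSel, integral_undef hint]
    exact hC

theorem abs_price_le_sum (hs : IsSelection M s) (v : Fin m → ℝ) :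
    |(s v).2| ≤ ∑ e ∈ M, |e.2| :=
  single_le_sum (f := fun e : Entry m => |e.2|) (fun _ _ => abs_nonneg _) (hs v).1

theorem revSel_le_Rev (hs : IsSelection M s) : revSel D s ≤ Rev D M := by
  refine le_csSup ⟨∑ e ∈ M, |e.2|, ?_⟩ ⟨s, hs, rfl⟩
  rintro r ⟨s', hs', rfl⟩
  exact revSel_le_of_ae_le (sum_nonneg fun _ _ => abs_nonneg _)
    (.of_forall fun v => (le_abs_self _).trans (abs_price_le_sum hs' v))

theorem integrable_price (hs : IsSelection M s) (hsm : Measurable s) :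
    Integrable (fun v => (s v).2) D :=
  .of_bound (measurable_snd.comp hsm).aestronglyMeasurable _
    (.of_forall fun v => abs_price_le_sum hs v)

variable {H : ℝ}

theorem Rev_le (hH : 0 ≤ H) (hD : ∀ᵐ v ∂D, ∀ j, v j ≤ H) (hM : IsMenu m M) :
    Rev D M ≤ H := by
  obtain ⟨s, hs, -⟩ := exists_measurable_isSelection hM.nonempty
  refine csSup_le ⟨_, s, hs, rfl⟩ ?_
  rintro r ⟨s', hs', rfl⟩
  refine revSel_le_of_ae_le hH ?_
  filter_upwards [hD] with v hv
  exact (price_le_value hM hs' v).trans ((hM.2 _ (hs' v).1).value_le hH hv)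

theorem revSel_le_OPT (hH : 0 ≤ H) (hD : ∀ᵐ v ∂D, ∀ j, v j ≤ H) (hM : IsMenu m M)
    (hs : IsSelection M s) : revSel D s ≤ OPT D := by
  refine (revSel_le_Rev hs).trans (le_csSup ⟨H, ?_⟩ ⟨M, hM, rfl⟩)
  rintro r ⟨M', hM', rfl⟩
  exact Rev_le hH hD hM'

end RevenueBounds

section PostedPrice

variable {m : ℕ}

noncomputable def postedPriceMenu (m : ℕ) (t : ℝ) : Finset (Entry m) :=
  insert (0, 0) (univ.image fun j => (Pi.single j 1, t))

theorem isMenu_postedPriceMenu (t : ℝ) : IsMenu m (postedPriceMenu m t) := by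
  refine ⟨mem_insert_self _ _, fun e he => ?_⟩
  rcases mem_insert.1 he with rfl | he
  · exact ⟨fun _ => le_rfl, by simp⟩
  · obtain ⟨j, -, rfl⟩ := mem_image.1 he
    refine ⟨fun i => ?_, by simp⟩
    rcases eq_or_ne i j with rfl | h <;> simp [*]

theorem utility_single (v : Fin m → ℝ) (j : Fin m) (t : ℝ) :
    utility v (Pi.single j 1, t) = v j - t := by
  simp [utility, Pi.single_apply]

def exceeds (t : ℝ) : Set (Fin m → ℝ) := {v | ∃ j, t < v j}

theorem mem_exceeds {t : ℝ} {v : Fin m → ℝ} : v ∈ exceeds t ↔ ∃ j, t < v j := Iff.rfl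

theorem measurableSet_exceeds (t : ℝ) : MeasurableSet (exceeds (m := m) t) := by
  simp only [exceeds, Set.ofPred_exists]
  exact .iUnion fun j => measurableSet_lt measurable_const (measurable_pi_apply j)

theorem indicator_exceeds_le_price {t : ℝ} (ht : 0 ≤ t) {s : (Fin m → ℝ) → Entry m}
    (hs : IsSelection (postedPriceMenu m t) s) (v : Fin m → ℝ) :
    (exceeds t).indicator (fun _ => t) v ≤ (s v).2 := by
  rcases mem_insert.1 (hs v).1 with h0 | h
  · have hv : v ∉ exceeds t := fun ⟨j, hj⟩ => by
      have := (hs v).2 _ (mem_insert_of_mem (mem_image_of_mem _ (mem_univ j)))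
      rw [utility_single, h0, utility_zero] at this
      linarith
    simp [Set.indicator_of_notMem hv, h0]
  · obtain ⟨j, -, h⟩ := mem_image.1 h
    rw [← h]
    exact Set.indicator_le_self' (fun _ _ => ht) v

end PostedPrice

section TailBound

variable {m : ℕ} {D : Measure (Fin m → ℝ)} [IsProbabilityMeasure D] {H : ℝ}

theorem integral_indicator_exceeds_le_OPT (hH : 0 ≤ H) (hD : ∀ᵐ v ∂D, ∀ j, v j ≤ H)
    {t : ℝ} (ht : 0 ≤ t) : ∫ v, (exceeds t).indicator (fun _ => t) v ∂D ≤ OPT D := by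
  obtain ⟨s, hs, hsm⟩ := exists_measurable_isSelection (isMenu_postedPriceMenu (m := m) t).nonempty
  calc ∫ v, (exceeds t).indicator (fun _ => t) v ∂D ≤ revSel D s :=
        integral_mono ((integrable_const t).indicator (measurableSet_exceeds t))
          (integrable_price hs hsm) (indicator_exceeds_le_price ht hs)
    _ ≤ OPT D := revSel_le_OPT hH hD (isMenu_postedPriceMenu t) hs

theorem half_le_OPT (hm : 0 < m) (hH : 0 ≤ H) (hD : ∀ᵐ v ∂D, ∀ j, v j ∈ Set.Icc 1 H) :
    1 / 2 ≤ OPT D := by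
  have hexc : ∀ᵐ v ∂D, (exceeds (1 / 2)).indicator (fun _ => (1 / 2 : ℝ)) v = 1 / 2 := by
    filter_upwards [hD] with v hv
    exact Set.indicator_of_mem (mem_exceeds.2 ⟨⟨0, hm⟩, by linarith [(hv ⟨0, hm⟩).1]⟩) _
  calc (1 / 2 : ℝ) = ∫ v, (exceeds (1 / 2)).indicator (fun _ => (1 / 2 : ℝ)) v ∂D := by
        rw [integral_congr_ae hexc]; simp
    _ ≤ OPT D := integral_indicator_exceeds_le_OPT hH
        (hD.mono fun v hv j => (hv j).2) (by norm_num)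

theorem le_one_add_sum_two_pow (N : ℕ) {x : ℝ} (hx : x ≤ 2 ^ N) :
    x ≤ 1 + ∑ k ∈ range N, if (2 : ℝ) ^ k < x then (2 : ℝ) ^ k else 0 := by
  induction N generalizing x with
  | zero => simpa using hx
  | succ N ih =>
    rw [sum_range_succ]
    by_cases hxN : x ≤ 2 ^ N
    · have := ih hxN
      split_ifs <;> linarith
    · replace hxN := not_le.1 hxN
      have h2N := ih (le_refl ((2 : ℝ) ^ N))
      have hmono : ∑ k ∈ range N, (if (2 : ℝ) ^ k < 2 ^ N then (2 : ℝ) ^ k else 0) ≤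
          ∑ k ∈ range N, if (2 : ℝ) ^ k < x then (2 : ℝ) ^ k else 0 :=
        sum_le_sum fun k _ => by split_ifs <;> first | linarith | positivity
      rw [if_pos hxN]
      rw [pow_succ] at hx
      linarith

noncomputable def tailSum (N : ℕ) (v : Fin m → ℝ) : ℝ :=
  ∑ k ∈ range N, (exceeds (2 ^ k)).indicator (fun _ => (2 : ℝ) ^ k) v

theorem value_le_one_add_tailSum {N : ℕ} {x v : Fin m → ℝ} (hx : IsLottery m x)
    (hv : ∀ j, v j ≤ 2 ^ N) : ∑ j, v j * x j ≤ 1 + tailSum N v := by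
  refine (le_one_add_sum_two_pow N (hx.value_le (by positivity) hv)).trans ?_
  unfold tailSum
  gcongr with k
  split_ifs with hk
  · rw [Set.indicator_of_mem]
    by_contra hne
    simp only [mem_exceeds, not_exists, not_lt] at hne
    exact not_lt.2 (hx.value_le (by positivity) hne) hk
  · exact Set.indicator_nonneg (fun _ _ => by positivity) v

theorem integrable_tailSum (N : ℕ) : Integrable (tailSum N) D :=
  integrable_finsetSum _ fun _ _ =>
    (integrable_const _).indicator (measurableSet_exceeds _)

theorem integral_tailSum_le (hH : 0 ≤ H) (hD : ∀ᵐ v ∂D, ∀ j, v j ≤ H) (N : ℕ) :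
    ∫ v, tailSum N v ∂D ≤ N * OPT D := by
  unfold tailSum
  rw [integral_finsetSum _ fun k _ => (integrable_const _).indicator (measurableSet_exceeds _)]
  simpa using sum_le_sum fun k (_ : k ∈ range N) =>
    integral_indicator_exceeds_le_OPT hH hD (by positivity : (0 : ℝ) ≤ 2 ^ k)

end TailBound

section Nudge

theorem one_sub_le_inv_one_add {τ : ℝ} (hτ : 0 ≤ τ) : 1 - τ ≤ (1 + τ)⁻¹ := by
  rw [← one_div, le_div_iff₀ (by linarith)]
  nlinarith

/- `hC`: the buyer prefers the entry `(x, p)` to `(y, q)` in the original menu. `hA`: after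
rounding he prefers the image of `(y, q)` (value at most `Y`, price `p'`) to that of `(x, p)`
(value at least `α X - τ`, price at most `(1 - η) p`). `hB`: rounding the discounted price
`(1 - η) q` loses a factor `α` and at most `τ` more. Since the discount `η q` grows with the
price, switching to a much cheaper entry cannot pay off. -/
theorem nudge_price_bound {α η τ X p Y q p' : ℝ} (hη : 0 < η) (hη3 : η ≤ 1 / 3) (hτ : 0 < τ)
    (hτη : τ ≤ η ^ 2) (hα : 1 - τ ≤ α) (hα1 : α ≤ 1) (hp : 0 ≤ p) (hX : 0 ≤ X)
    (hp' : 0 ≤ p') (hA : α * X - τ - (1 - η) * p ≤ Y - p')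
    (hB : α * ((1 - η) * q) - τ ≤ p') (hC : Y - q ≤ X - p) :
    (1 - 3 * η) * p - τ / η * (X + 3) ≤ p' := by
  have hscale : η * (τ / η * (X + 3)) = τ * (X + 3) := by field_simp
  suffices η * ((1 - 3 * η) * p) - τ * (X + 3) ≤ η * p' by nlinarith
  have hq : η * p - τ * X - 2 * τ ≤ (1 - α * (1 - η)) * q := by
    nlinarith [mul_nonneg (sub_nonneg.2 (show 1 - α ≤ τ by linarith)) hX]
  rcases le_or_gt (η * p - τ * X - 2 * τ) 0 with hN | hN
  · nlinarith
  · have hq0 : 0 < q := by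
      by_contra! h
      nlinarith [mul_nonneg (show 0 ≤ 1 - α * (1 - η) by nlinarith) (neg_nonneg.2 h)]
    have hcoef : (1 - 3 * η) * (η + τ) ≤ η * ((1 - τ) * (1 - η)) := by
      nlinarith [mul_pos hη hτ, mul_pos (mul_pos hη hη) hτ]
    have hqN : (1 - 3 * η) * (η * p - τ * X - 2 * τ) ≤ η * ((1 - τ) * (1 - η)) * q := by
      have hqητ : (1 - α * (1 - η)) * q ≤ (η + τ) * q :=
        mul_le_mul_of_nonneg_right (by nlinarith) hq0.le
      nlinarith [mul_le_mul_of_nonneg_right hcoef hq0.le,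
        mul_le_mul_of_nonneg_left (hq.trans hqητ) (show 0 ≤ 1 - 3 * η by linarith)]
    have hp'q : η * ((1 - τ) * (1 - η)) * q - η * τ ≤ η * p' := by
      nlinarith [mul_le_mul_of_nonneg_right hα (show 0 ≤ (1 - η) * q by nlinarith)]
    nlinarith [mul_nonneg hτ.le hX]

end Nudge

section RoundMenu

variable {m : ℕ} {H η τ : ℝ} {K : ℕ}

noncomputable def roundEntry (η τ : ℝ) (K : ℕ) (e : Entry m) : Entry m :=
  (fun j => roundDown (geomGrid ((1 + τ) ^ K)⁻¹ (1 + τ) K) (e.1 j),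
    roundDown (geomGrid τ (1 + τ) K) ((1 - η) * e.2))

-- Entries priced above `H` are never bought on `[0, H]^m`; dropping them keeps every price
-- within the range of the price grid.
noncomputable def roundMenu (H η τ : ℝ) (K : ℕ) (M : Finset (Entry m)) : Finset (Entry m) :=
  (M.filter fun e => e.2 ≤ H).image (roundEntry η τ K)

theorem roundEntry_zero : roundEntry η τ K ((0, 0) : Entry m) = (0, 0) := by
  ext <;> simp [roundEntry, roundDown_zero]

theorem isLottery_roundEntry {e : Entry m} (he : IsLottery m e.1) :
    IsLottery m (roundEntry η τ K e).1 :=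
  ⟨fun _ => roundDown_nonneg,
    (sum_le_sum fun j _ => roundDown_le (he.1 j)).trans he.2⟩

theorem isMenu_roundMenu (hH : 0 ≤ H) {M : Finset (Entry m)} (hM : IsMenu m M) :
    IsMenu m (roundMenu H η τ K M) := by
  refine ⟨mem_image.2 ⟨(0, 0), mem_filter.2 ⟨hM.1, hH⟩, roundEntry_zero⟩, fun e he => ?_⟩
  obtain ⟨f, hf, rfl⟩ := mem_image.1 he
  exact isLottery_roundEntry (hM.2 f (mem_filter.1 hf).1)

theorem card_roundMenu_le (M : Finset (Entry m)) :
    (roundMenu H η τ K M).card ≤ (K + 2) ^ (m + 1) := by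
  have hsub : roundMenu H η τ K M ⊆
      Fintype.piFinset (fun _ => geomGrid ((1 + τ) ^ K)⁻¹ (1 + τ) K) ×ˢ
        geomGrid τ (1 + τ) K := by
    intro e he
    obtain ⟨f, -, rfl⟩ := mem_image.1 he
    exact mem_product.2 ⟨Fintype.mem_piFinset.2 fun j => roundDown_mem (zero_mem_geomGrid _ _ _),
      roundDown_mem (zero_mem_geomGrid _ _ _)⟩
  calc (roundMenu H η τ K M).card
      ≤ (geomGrid ((1 + τ) ^ K)⁻¹ (1 + τ) K).card ^ m * (geomGrid τ (1 + τ) K).card := by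
        simpa [card_product, Fintype.card_piFinset] using card_le_card hsub
    _ ≤ (K + 2) ^ m * (K + 2) := by gcongr <;> exact card_geomGrid_le _ _ _
    _ = (K + 2) ^ (m + 1) := (pow_succ _ _).symm

theorem value_roundEntry_le {v : Fin m → ℝ} (hv : ∀ j, 0 ≤ v j) {e : Entry m}
    (he : IsLottery m e.1) : ∑ j, v j * (roundEntry η τ K e).1 j ≤ ∑ j, v j * e.1 j :=
  sum_le_sum fun j _ => mul_le_mul_of_nonneg_left (roundDown_le (he.1 j)) (hv j)

theorem value_roundEntry_ge (hτ : 0 < τ) (hK : m * H ≤ τ * (1 + τ) ^ K) {v : Fin m → ℝ}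
    (hv : ∀ j, v j ∈ Set.Icc 0 H) {e : Entry m} (he : IsLottery m e.1) :
    (1 + τ)⁻¹ * ∑ j, v j * e.1 j - τ ≤ ∑ j, v j * (roundEntry η τ K e).1 j := by
  set a := ((1 + τ) ^ K)⁻¹
  have ha : 0 < a := by positivity
  have hcoord : ∀ j, v j * e.1 j / (1 + τ) - H * a ≤ v j * (roundEntry η τ K e).1 j := by
    intro j
    have hx1 : e.1 j ≤ a * (1 + τ) ^ K := by
      rw [inv_mul_cancel₀ (by positivity)]
      exact (single_le_sum (fun i _ => he.1 i) (mem_univ j)).trans he.2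
    have := mul_le_mul_of_nonneg_left
      (div_sub_le_roundDown_geomGrid ha (by linarith) hx1) (hv j).1
    rw [mul_sub, ← mul_div_assoc] at this
    show _ ≤ v j * roundDown _ _
    linarith [mul_le_mul_of_nonneg_right (hv j).2 ha.le]
  have hmHa : m * H * a ≤ τ := (div_le_iff₀ (by positivity)).2 hK
  calc (1 + τ)⁻¹ * ∑ j, v j * e.1 j - τ ≤ ∑ j, (v j * e.1 j / (1 + τ) - H * a) := by
        simp only [sum_sub_distrib, sum_const, card_univ, Fintype.card_fin, nsmul_eq_mul,
          ← sum_div]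
        rw [inv_mul_eq_div]
        linarith
    _ ≤ _ := sum_le_sum fun j _ => hcoord j

theorem price_roundEntry_le (hη : η ≤ 1) {e : Entry m} (hp : 0 ≤ e.2) :
    (roundEntry η τ K e).2 ≤ (1 - η) * e.2 :=
  roundDown_le (mul_nonneg (by linarith) hp)

theorem price_roundEntry_ge (hτ : 0 < τ) {e : Entry m}
    (hp : (1 - η) * e.2 ≤ τ * (1 + τ) ^ K) :
    (1 + τ)⁻¹ * ((1 - η) * e.2) - τ ≤ (roundEntry η τ K e).2 := by
  rw [inv_mul_eq_div]
  exact div_sub_le_roundDown_geomGrid hτ (by linarith) hp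

theorem price_roundMenu_ge (hm : 1 ≤ m) (hη : 0 < η) (hη3 : η ≤ 1 / 3) (hτ : 0 < τ)
    (hτη : τ ≤ η ^ 2) (hK : m * H ≤ τ * (1 + τ) ^ K) {M : Finset (Entry m)} (hM : IsMenu m M)
    {s s' : (Fin m → ℝ) → Entry m} (hs : IsSelection M s)
    (hs' : IsSelection (roundMenu H η τ K M) s') {v : Fin m → ℝ}
    (hv : ∀ j, v j ∈ Set.Icc 0 H) :
    (1 - 3 * η) * (s v).2 - τ / η * (∑ j, v j * (s v).1 j + 3) ≤ (s' v).2 := by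
  have hv0 : ∀ j, 0 ≤ v j := fun j => (hv j).1
  have hH : 0 ≤ H := (hv ⟨0, hm⟩).1.trans (hv ⟨0, hm⟩).2
  have hHK : H ≤ τ * (1 + τ) ^ K :=
    (le_mul_of_one_le_left hH (by exact_mod_cast hm)).trans hK
  obtain ⟨f, hf, hf'⟩ := mem_image.1 (hs' v).1
  obtain ⟨hfM, hfH⟩ := mem_filter.1 hf
  have hp'0 : 0 ≤ (s' v).2 := hf' ▸ roundDown_nonneg
  have hX0 : 0 ≤ ∑ j, v j * (s v).1 j := (hM.2 _ (hs v).1).value_nonneg hv0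
  rcases lt_or_ge (s v).2 0 with hp | hp
  · have : τ / η * (∑ j, v j * (s v).1 j + 3) ≥ 0 := by positivity
    nlinarith
  have hpX := price_le_value hM hs v
  have hmem : roundEntry η τ K (s v) ∈ roundMenu H η τ K M :=
    mem_image_of_mem _ (mem_filter.2 ⟨(hs v).1,
      hpX.trans ((hM.2 _ (hs v).1).value_le hH fun j => (hv j).2)⟩)
  refine nudge_price_bound (α := (1 + τ)⁻¹) hη hη3 hτ hτη (one_sub_le_inv_one_add hτ.le)
    (inv_le_one_of_one_le₀ (by linarith)) hp hX0 hp'0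
    (Y := ∑ j, v j * f.1 j) (q := f.2) ?_ ?_ ?_
  · have hprefer := (hs' v).2 _ hmem
    have hvalue := value_roundEntry_ge (η := η) hτ hK hv (hM.2 _ (hs v).1)
    have hprice := price_roundEntry_le (η := η) (τ := τ) (K := K) (by linarith) hp
    have hvalue' := value_roundEntry_le (η := η) (τ := τ) (K := K) hv0 (hM.2 f hfM)
    rw [← hf'] at hprefer ⊢
    simp only [utility] at hprefer
    linarith
  · rw [← hf']
    refine price_roundEntry_ge hτ (le_trans ?_ hHK)
    rcases le_total 0 f.2 with h | h <;> nlinarith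
  · have := (hs v).2 f hfM
    simp only [utility] at this
    linarith

end RoundMenu

section Revenue

variable {m : ℕ} {D : Measure (Fin m → ℝ)} [IsProbabilityMeasure D] {H η τ : ℝ} {K N : ℕ}

theorem le_Rev_roundMenu (hm : 1 ≤ m) (hη : 0 < η) (hη3 : η ≤ 1 / 3) (hτ : 0 < τ)
    (hτη : τ ≤ η ^ 2) (hK : m * H ≤ τ * (1 + τ) ^ K) (hH : 0 ≤ H) (hN : H ≤ 2 ^ N)
    (hD : ∀ᵐ v ∂D, ∀ j, v j ∈ Set.Icc 1 H) {M : Finset (Entry m)} (hM : IsMenu m M)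
    {s : (Fin m → ℝ) → Entry m} (hs : IsSelection M s)
    (hint : Integrable (fun v => (s v).2) D) :
    (1 - 3 * η) * revSel D s - τ / η * (N * OPT D + 4) ≤ Rev D (roundMenu H η τ K M) := by
  have hM' := isMenu_roundMenu (η := η) (τ := τ) (K := K) hH hM
  obtain ⟨s', hs', hs'm⟩ := exists_measurable_isSelection hM'.nonempty
  have hDH : ∀ᵐ v ∂D, ∀ j, v j ≤ H := hD.mono fun v hv j => (hv j).2
  have hpoint : ∀ᵐ v ∂D, (1 - 3 * η) * (s v).2 - τ / η * (tailSum N v + 4) ≤ (s' v).2 := by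
    filter_upwards [hD] with v hv
    have hv0 : ∀ j, v j ∈ Set.Icc 0 H := fun j => ⟨zero_le_one.trans (hv j).1, (hv j).2⟩
    have hval := value_le_one_add_tailSum (N := N) (hM.2 _ (hs v).1)
      fun j => (hv j).2.trans hN
    have := price_roundMenu_ge hm hη hη3 hτ hτη hK hM hs hs' hv0
    have : 0 ≤ τ / η := by positivity
    nlinarith
  have hg : Integrable (fun v => tailSum N v + 4) D :=
    (integrable_tailSum N).add (integrable_const 4)
  calc (1 - 3 * η) * revSel D s - τ / η * (N * OPT D + 4)
      ≤ (1 - 3 * η) * revSel D s - τ / η * (∫ v, tailSum N v ∂D + 4) := by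
        gcongr
        exact integral_tailSum_le hH hDH N
    _ = ∫ v, ((1 - 3 * η) * (s v).2 - τ / η * (tailSum N v + 4)) ∂D := by
        rw [integral_sub (hint.const_mul _) (hg.const_mul _), integral_const_mul,
          integral_const_mul, integral_add (integrable_tailSum N) (integrable_const 4)]
        simp [revSel]
    _ ≤ revSel D s' :=
        integral_mono_ae ((hint.const_mul _).sub (hg.const_mul _)) (integrable_price hs' hs'm)
          hpoint
    _ ≤ Rev D (roundMenu H η τ K M) := revSel_le_Rev hs'

end Revenue

section Parameters

open Real

theorem le_one_add_pow_ceil_mul_ceil {τ y : ℝ} (hτ : 0 < τ) (hy : 0 < y) :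
    y ≤ (1 + τ) ^ (⌈τ⁻¹⌉₊ * ⌈logb 2 y⌉₊) := by
  have h2 : (2 : ℝ) ≤ (1 + τ) ^ ⌈τ⁻¹⌉₊ := by
    have := one_add_mul_le_pow (show -2 ≤ τ by linarith) ⌈τ⁻¹⌉₊
    have : 1 ≤ (⌈τ⁻¹⌉₊ : ℝ) * τ := by
      rw [← div_le_iff₀ hτ, one_div]
      exact Nat.le_ceil _
    linarith
  calc y = 2 ^ logb 2 y := (rpow_logb (by norm_num) (by norm_num) hy).symm
    _ ≤ 2 ^ (⌈logb 2 y⌉₊ : ℝ) := rpow_le_rpow_of_exponent_le (by norm_num) (Nat.le_ceil _)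
    _ = 2 ^ ⌈logb 2 y⌉₊ := rpow_natCast _ _
    _ ≤ ((1 + τ) ^ ⌈τ⁻¹⌉₊) ^ ⌈logb 2 y⌉₊ := by gcongr
    _ = _ := (pow_mul _ _ _).symm

theorem one_le_logb_two {x : ℝ} (hx : 2 ≤ x) : 1 ≤ logb 2 x := by
  rw [le_logb_iff_rpow_le (by norm_num) (by linarith)]
  simpa using hx

theorem logb_two_le_two_mul {x : ℝ} (hx : 0 ≤ x) : logb 2 x ≤ 2 * x := by
  rw [logb, div_le_iff₀ (log_pos (by norm_num))]
  nlinarith [log_le_self hx, log_two_gt_d9]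

theorem ceil_mul_ceil_add_two_le {m : ℕ} {H ε τ : ℝ} (hm : 2 ≤ m) (hH : 2 ≤ H) (hε : 0 < ε)
    (hε2 : ε < 1 / 2) (hτ : τ = (ε / 6) ^ 2 / (8 * logb 2 H)) :
    (⌈τ⁻¹⌉₊ : ℝ) * ⌈logb 2 (m * H / τ)⌉₊ + 2 ≤
      ((logb 2 H + logb 2 m + logb 2 (1 / ε)) / ε) ^ 7 := by
  set a₁ := logb 2 H
  set a₂ := logb 2 (m : ℝ)
  set a₃ := logb 2 (1 / ε)
  have hτinv : τ⁻¹ = 288 * a₁ * (1 / ε) ^ 2 := by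
    rw [hτ]; field_simp; ring
  set e := 1 / ε
  have he : 2 ≤ e := by rw [le_div_iff₀ hε]; linarith
  have ha₁ : 1 ≤ a₁ := one_le_logb_two hH
  have ha₂ : 1 ≤ a₂ := one_le_logb_two (by exact_mod_cast hm)
  have ha₃ : 1 ≤ a₃ := one_le_logb_two he
  set A := a₁ + a₂ + a₃
  have hn : (⌈τ⁻¹⌉₊ : ℝ) ≤ 289 * A * e ^ 2 := by
    have := Nat.ceil_lt_add_one (show 0 ≤ τ⁻¹ by rw [hτinv]; positivity)
    nlinarith
  have hlog : logb 2 (m * H / τ) = a₂ + a₁ + (logb 2 288 + logb 2 a₁ + 2 * a₃) := by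
    rw [div_eq_mul_inv, hτinv, logb_mul (by positivity) (by positivity),
      logb_mul (by positivity) (by positivity), logb_mul (by positivity) (by positivity),
      logb_mul (by positivity) (by positivity), logb_pow]
    push_cast
    ring
  have h288 : logb 2 288 ≤ 9 := by
    rw [logb_le_iff_le_rpow (by norm_num) (by norm_num)]
    norm_num
  have hj : (⌈logb 2 (m * H / τ)⌉₊ : ℝ) ≤ 7 * A := by
    have := Nat.ceil_lt_add_one (show 0 ≤ logb 2 (m * H / τ) by
      rw [hlog]
      have := logb_nonneg (b := 2) (by norm_num) (show (1 : ℝ) ≤ 288 by norm_num)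
      have := logb_nonneg (b := 2) (by norm_num) ha₁
      linarith)
    linarith [logb_two_le_two_mul (show 0 ≤ a₁ by linarith)]
  have hB : 6 ≤ A * e := by nlinarith
  calc (⌈τ⁻¹⌉₊ : ℝ) * ⌈logb 2 (m * H / τ)⌉₊ + 2 ≤ (289 * A * e ^ 2) * (7 * A) + 2 := by
        gcongr
    _ ≤ 6 ^ 5 * (A * e) ^ 2 := by nlinarith
    _ ≤ (A * e) ^ 5 * (A * e) ^ 2 := by gcongr
    _ = (A / ε) ^ 7 := by rw [div_eq_mul_one_div]; ring

theorem le_two_pow_ceil_logb {x : ℝ} (hx : 0 < x) : x ≤ 2 ^ ⌈logb 2 x⌉₊ :=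
  calc x = 2 ^ logb 2 x := (rpow_logb (by norm_num) (by norm_num) hx).symm
    _ ≤ 2 ^ (⌈logb 2 x⌉₊ : ℝ) := rpow_le_rpow_of_exponent_le (by norm_num) (Nat.le_ceil _)
    _ = 2 ^ ⌈logb 2 x⌉₊ := rpow_natCast _ _

theorem card_roundMenu_le_rpow {m : ℕ} {H ε η τ : ℝ} (hm : 2 ≤ m) (hH : 2 ≤ H) (hε : 0 < ε)
    (hε2 : ε < 1 / 2) (hτ : τ = (ε / 6) ^ 2 / (8 * logb 2 H)) (M : Finset (Entry m)) :
    ((roundMenu H η τ (⌈τ⁻¹⌉₊ * ⌈logb 2 (m * H / τ)⌉₊) M).card : ℝ) ≤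
      ((logb 2 H + logb 2 m + logb 2 (1 / ε)) / ε) ^ ((14 : ℝ) * m) := by
  set B := (logb 2 H + logb 2 m + logb 2 (1 / ε)) / ε
  have hB : 1 ≤ B := by
    rw [le_div_iff₀ hε]
    linarith [one_le_logb_two hH, one_le_logb_two (x := m) (by exact_mod_cast hm),
      one_le_logb_two (x := 1 / ε) (by rw [le_div_iff₀ hε]; linarith)]
  calc _ ≤ (((⌈τ⁻¹⌉₊ * ⌈logb 2 (m * H / τ)⌉₊ + 2 : ℕ) : ℝ)) ^ (m + 1) := by
        exact_mod_cast card_roundMenu_le M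
    _ ≤ (B ^ 7) ^ (m + 1) := by
        gcongr
        push_cast
        exact ceil_mul_ceil_add_two_le hm hH hε hε2 hτ
    _ ≤ B ^ (14 * m) := by
        rw [← pow_mul]
        exact pow_le_pow_right₀ hB (by omega)
    _ = B ^ ((14 : ℝ) * m) := by
        rw [← rpow_natCast]
        push_cast
        rfl

end Parameters

section NearOptimal

variable {m : ℕ} {D : Measure (Fin m → ℝ)}

theorem exists_revSel_gt_OPT_sub {δ : ℝ} (hδ : 0 < δ) :
    ∃ M s, IsMenu m M ∧ IsSelection M s ∧ OPT D - δ < revSel D s := by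
  have hnull : IsMenu m {((0 : Fin m → ℝ), (0 : ℝ))} :=
    ⟨mem_singleton_self _, fun e he => by simp [mem_singleton.1 he, IsLottery]⟩
  have hOPT : OPT D - δ < sSup {r | ∃ M : Finset (Entry m), IsMenu m M ∧ r = Rev D M} :=
    sub_lt_self _ hδ
  obtain ⟨_, ⟨M, hM, rfl⟩, hMgt⟩ := exists_lt_of_lt_csSup (by exact ⟨_, _, hnull, rfl⟩) hOPT
  obtain ⟨s₀, hs₀, -⟩ := exists_measurable_isSelection hM.nonempty
  have hRev : OPT D - δ < sSup {r | ∃ s, IsSelection M s ∧ r = revSel D s} := hMgt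
  obtain ⟨_, ⟨s, hs, rfl⟩, hsgt⟩ := exists_lt_of_lt_csSup (by exact ⟨_, s₀, hs₀, rfl⟩) hRev
  exact ⟨M, s, hM, hs, hsgt⟩

end NearOptimal

/-- **Theorem 2 (general case).** There is a universal constant `c > 0` such that for every
`m ≥ 2`, `H ≥ 2`, `ε ∈ (0, 1/2)` and every distribution `D` supported on `[1, H]^m`, there
is a menu with at most `((log₂ H + log₂ m + log₂(1/ε))/ε)^(c·m)` entries whose revenue is at
least a `(1 - ε)` fraction of the optimal revenue. -/
theorem menu_size_general :
    ∃ c : ℝ, 0 < c ∧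
      ∀ (m : ℕ), 2 ≤ m → ∀ H : ℝ, 2 ≤ H → ∀ ε : ℝ, 0 < ε → ε < 1 / 2 →
        ∀ D : Measure (Fin m → ℝ), IsProbabilityMeasure D →
          D {v | ∀ j, v j ∈ Set.Icc (1 : ℝ) H} = 1 →
          ∃ M : Finset (Entry m), IsMenu m M ∧
            (M.card : ℝ) ≤
              ((Real.logb 2 H + Real.logb 2 m + Real.logb 2 (1 / ε)) / ε) ^ (c * m) ∧
            (1 - ε) * OPT D ≤ Rev D M := by
  refine ⟨14, by norm_num, fun m hm H hH ε hε hε2 D _ hsupp => ?_⟩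
  set L := Real.logb 2 H
  set η := ε / 6 with hη
  set τ := η ^ 2 / (8 * L) with hτ
  have hL : 1 ≤ L := one_le_logb_two hH
  have hbox : ∀ᵐ v ∂D, ∀ j, v j ∈ Set.Icc 1 H :=
    (ae_iff_prob_eq_one (by measurability)).2 hsupp
  have hOPT : 1 / 2 ≤ OPT D := half_le_OPT (by omega) (by linarith) hbox
  obtain ⟨M, s, hM, hs, hrev⟩ := exists_revSel_gt_OPT_sub (D := D) (δ := ε / 8) (by positivity)
  have hint : Integrable (fun v => (s v).2) D :=
    Integrable.of_integral_ne_zero (show revSel D s ≠ 0 by linarith)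
  have hK : m * H ≤ τ * (1 + τ) ^ (⌈τ⁻¹⌉₊ * ⌈Real.logb 2 (m * H / τ)⌉₊) :=
    (div_le_iff₀' (by positivity)).1 (le_one_add_pow_ceil_mul_ceil (by positivity) (by positivity))
  refine ⟨roundMenu H η τ _ M, isMenu_roundMenu (by linarith) hM,
    card_roundMenu_le_rpow hm hH hε hε2 rfl M, ?_⟩
  have hloss : τ / η * (⌈L⌉₊ * OPT D + 4) ≤ 5 / 24 * ε * OPT D := by
    have hNL : (⌈L⌉₊ : ℝ) ≤ 2 * L := by
      linarith [Nat.ceil_lt_add_one (show 0 ≤ L by linarith)]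
    have : ⌈L⌉₊ * OPT D + 4 ≤ 10 * L * OPT D := by
      nlinarith [mul_le_mul_of_nonneg_right hNL (show 0 ≤ OPT D by linarith)]
    rw [show τ / η = ε / (48 * L) by rw [hτ, hη]; field_simp; ring,
      div_mul_eq_mul_div, div_le_iff₀ (by positivity)]
    nlinarith [mul_le_mul_of_nonneg_left this hε.le]
  refine le_trans ?_ (le_Rev_roundMenu (by omega) (by positivity) (by linarith) (by positivity)
    (div_le_self (sq_nonneg η) (by linarith)) hK (by linarith)
    (le_two_pow_ceil_logb (by linarith)) hbox hM hs hint)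
  nlinarith [mul_le_mul_of_nonneg_left hrev.le (show 0 ≤ 1 - 3 * η by linarith)]
end

section
/- There exists a universal constant c > 0 such that for all integers m ≥ 1, t ≥ 1, and integer H with 2 ≤ H < 2^{m/400} satisfying t · m · ⌈log₂ H⌉ ≤ 2^{m/400}, and for every function A mapping t-tuples of valuations in {1, …, H}^m to menus (a deterministic sample-based auction-learning algorithm), there exists a probability distribution D supported on {1, …, H}^m such that E_{(v_1, …, v_t) ∼ D^t}[Rev_D(A(v_1, …, v_t))] ≤ c · OPT(D) / log₂ H. That is, exponentially many samples in m are needed to beat an O(1/log H) approximation of the optimal revenue. -/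
open MeasureTheory

/-!
Yao's principle for a random family of hard distributions. Take `t·H` sets of `m/16` items that
pairwise share at most half their elements (they exist by a greedy choice and a binomial count).
Give each set `S_w` an independent random level `σ w ≤ ⌊log₂ H⌋`, of probability proportional
to `2^(-σ w)`, and let `D_σ` be uniform over the valuations worth `2^(σ w)` on `S_w` and `1`
elsewhere. Selling the uniform lottery over `S_w` at price `2^(σ w) / 2` is incentive compatible,
so `OPT(D_σ)` is at least the average of `2^(σ w) / 2`, which is `≳ log H` in expectation over `σ`.

On the other hand the `t` samples reveal at most `t` levels. The level of an unseen set is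
independent of the menu, and against the `2^(-ℓ)` prior of a single set a menu earns `O(1)`:
incentive compatibility between levels makes `∑ 2^(-ℓ) · price_ℓ` telescope. The seen sets
bring at most `t·H` in total, i.e. `O(1)` per support point, so the expected revenue is `O(1)`
and some `σ` does at least as well as the average.
-/

lemma sum_inv_two_pow_le (G : Finset ℕ) : ∑ ℓ ∈ G, ((2 : ℝ) ^ ℓ)⁻¹ ≤ 2 := by
  calc ∑ ℓ ∈ G, ((2 : ℝ) ^ ℓ)⁻¹ = ∑ ℓ ∈ G, (2 : ℝ)⁻¹ ^ ℓ := by simp_rw [inv_pow]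
    _ ≤ ∑' ℓ, (2 : ℝ)⁻¹ ^ ℓ :=
      (summable_geometric_of_lt_one (by norm_num) (by norm_num)).sum_le_tsum G
        fun ℓ _ => by positivity
    _ = 2 := tsum_geometric_inv_two

lemma sum_le_sum_filter_of_nonpos {α : Type*} {s : Finset α} {f : α → ℝ} {p : α → Prop}
    [DecidablePred p] (h : ∀ x ∈ s, ¬ p x → f x ≤ 0) : ∑ x ∈ s, f x ≤ ∑ x ∈ s with p x, f x := by
  rw [← Finset.sum_filter_add_sum_filter_not s p]
  linarith [Finset.sum_nonpos fun x hx =>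
    h x (Finset.mem_filter.1 hx).1 (Finset.mem_filter.1 hx).2]

section Telescoping

variable (X u : ℕ → ℝ)

lemma div_two_pow_add_sub_inv_le {a b : ℕ} (hba : b < a) (hub : u b ≤ 2 ^ b * X b + 1)
    (hchain : u b + (2 ^ a - 2 ^ b) * X b ≤ u a) :
    u b / 2 ^ b + X b - (2 ^ b)⁻¹ ≤ 2 * u a / 2 ^ a := by
  have hb : (0 : ℝ) < 2 ^ b := by positivity
  have hab : 2 * (2 : ℝ) ^ b ≤ 2 ^ a := by
    rw [← pow_succ']; exact pow_le_pow_right₀ (by norm_num) hba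
  rw [le_div_iff₀ (by positivity)]
  field_simp
  nlinarith [mul_nonneg (sub_nonneg.2 hab) (by linarith : 0 ≤ 2 ^ b * X b + 1 - u b)]

variable {G : Finset ℕ} {X u}

lemma sum_sub_inv_two_pow_le_of_lt (hu : ∀ ℓ ∈ G, 0 ≤ u ℓ) (huX : ∀ ℓ ∈ G, u ℓ ≤ 2 ^ ℓ * X ℓ + 1)
    (hchain : ∀ a ∈ G, ∀ b ∈ G, b < a → u b + (2 ^ a - 2 ^ b) * X b ≤ u a)
    {s : Finset ℕ} (hs : s ⊆ G) {a : ℕ} (ha : a ∈ G) (hsa : ∀ b ∈ s, b < a) :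
    ∑ ℓ ∈ s, (X ℓ - u ℓ / 2 ^ ℓ - (2 ^ ℓ)⁻¹) ≤ 2 * u a / 2 ^ a := by
  induction s using Finset.induction_on_max generalizing a with
  | empty => simpa using div_nonneg (mul_nonneg zero_le_two (hu a ha)) (by positivity)
  | insert b s hsb ih =>
    have hbG : b ∈ G := hs (Finset.mem_insert_self b s)
    have hba : b < a := hsa b (Finset.mem_insert_self b s)
    have hbs : b ∉ s := fun h => (hsb b h).false
    rw [Finset.sum_insert hbs]
    have := ih ((Finset.subset_insert b s).trans hs) hbG hsb
    have := div_two_pow_add_sub_inv_le X u hba (huX b hbG) (hchain a ha b hbG hba)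
    linarith [mul_div_assoc 2 (u b) (2 ^ b)]

/-- Read `X ℓ` as the probability that the buyer with value `2 ^ ℓ` for the items of a set gets one
of them, and `u ℓ` as his utility; `hchain` is incentive compatibility between levels. -/
lemma sum_sub_div_two_pow_le (hu : ∀ ℓ ∈ G, 0 ≤ u ℓ) (hX : ∀ ℓ ∈ G, X ℓ ≤ 1)
    (huX : ∀ ℓ ∈ G, u ℓ ≤ 2 ^ ℓ * X ℓ + 1)
    (hchain : ∀ a ∈ G, ∀ b ∈ G, b < a → u b + (2 ^ a - 2 ^ b) * X b ≤ u a) :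
    ∑ ℓ ∈ G, (X ℓ - u ℓ / 2 ^ ℓ) ≤ 2 + ∑ ℓ ∈ G, ((2 : ℝ) ^ ℓ)⁻¹ := by
  rcases G.eq_empty_or_nonempty with rfl | hG
  · simp
  set a := G.max' hG
  have ha : a ∈ G := G.max'_mem hG
  have hrest := sum_sub_inv_two_pow_le_of_lt hu huX hchain (Finset.erase_subset a G) ha
    fun b hb => G.lt_max'_of_mem_erase_max' hG hb
  have hua : u a / 2 ^ a ≤ X a + (2 ^ a)⁻¹ := by
    rw [div_le_iff₀ (by positivity), add_mul, inv_mul_cancel₀ (by positivity), mul_comm]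
    exact huX a ha
  have hsplit : ∑ ℓ ∈ G, (X ℓ - u ℓ / 2 ^ ℓ) =
      ∑ ℓ ∈ G, (X ℓ - u ℓ / 2 ^ ℓ - (2 ^ ℓ)⁻¹) + ∑ ℓ ∈ G, ((2 : ℝ) ^ ℓ)⁻¹ := by
    rw [← Finset.sum_add_distrib]; simp
  rw [hsplit, ← Finset.add_sum_erase G _ ha]
  linarith [hX a ha, mul_div_assoc 2 (u a) (2 ^ a)]

end Telescoping

section SetFamily

open Finset

lemma card_filter_le_card_inter_le {α : Type*} [Fintype α] [DecidableEq α] (S : Finset α)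
    (s k : ℕ) :
    #{T ∈ powersetCard s univ | k ≤ #(S ∩ T)} ≤
      (#S).choose k * (Fintype.card α).choose (s - k) := by
  calc #{T ∈ powersetCard s univ | k ≤ #(S ∩ T)}
      ≤ #((powersetCard k S ×ˢ powersetCard (s - k) univ).image fun p => p.1 ∪ p.2) := by
        refine card_le_card fun T hT => ?_
        obtain ⟨hT, hk⟩ := mem_filter.1 hT
        obtain ⟨U, hU, hUk⟩ := exists_subset_card_eq hk
        have hUT : U ⊆ T := hU.trans inter_subset_right
        refine mem_image.2 ⟨(U, T \ U), mem_product.2 ⟨?_, ?_⟩, union_sdiff_of_subset hUT⟩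
        · exact mem_powersetCard.2 ⟨hU.trans inter_subset_left, hUk⟩
        · exact mem_powersetCard.2 ⟨subset_univ _, by
            rw [card_sdiff_of_subset hUT, (mem_powersetCard.1 hT).2, hUk]⟩
    _ ≤ _ := card_image_le.trans (by simp)

lemma choose_mul_pow_le_choose_add {m i j : ℕ} (h : 15 * (i + j) ≤ m + 1) :
    m.choose i * 14 ^ j ≤ m.choose (i + j) := by
  induction j with
  | zero => simp
  | succ j ih =>
    have hstep : 14 * m.choose (i + j) ≤ m.choose (i + j + 1) := by
      have hid := Nat.choose_succ_right_eq m (i + j)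
      refine Nat.le_of_mul_le_mul_right (c := i + j + 1) ?_ (by omega)
      calc 14 * m.choose (i + j) * (i + j + 1) = m.choose (i + j) * (14 * (i + j + 1)) := by ring
        _ ≤ m.choose (i + j) * (m - (i + j)) := Nat.mul_le_mul_left _ (by omega)
        _ = _ := hid.symm
    calc m.choose i * 14 ^ (j + 1) = 14 * (m.choose i * 14 ^ j) := by ring
      _ ≤ 14 * m.choose (i + j) := Nat.mul_le_mul_left _ (ih (by omega))
      _ ≤ m.choose (i + (j + 1)) := hstep

lemma exists_subset_card_eq_pairwise_not {α : Type*} [DecidableEq α] (U : Finset α)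
    (r : α → α → Prop) [DecidableRel r] (hsymm : ∀ a b, r a b → r b a) (hrefl : ∀ a ∈ U, r a a)
    {B n : ℕ} (hB : ∀ a ∈ U, #{b ∈ U | r a b} ≤ B) (hn : n * B < #U) :
    ∃ F ⊆ U, #F = n ∧ (F : Set α).Pairwise fun a b => ¬ r a b := by
  induction n with
  | zero => exact ⟨∅, empty_subset U, rfl, by simp⟩
  | succ n ih =>
    obtain ⟨F, hFU, hFn, hF⟩ := ih (lt_of_le_of_lt (Nat.mul_le_mul_right B n.le_succ) hn)
    have hbad : #(F.biUnion fun a => {b ∈ U | r a b}) < #U :=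
      calc #(F.biUnion fun a => {b ∈ U | r a b}) ≤ ∑ a ∈ F, #{b ∈ U | r a b} := card_biUnion_le
        _ ≤ n * B := by simpa [hFn] using sum_le_card_nsmul F _ B fun a ha => hB a (hFU ha)
        _ < #U := lt_of_le_of_lt (Nat.mul_le_mul_right B n.le_succ) hn
    obtain ⟨c, hcU, hc⟩ := exists_mem_notMem_of_card_lt_card hbad
    have hcr : ∀ a ∈ F, ¬ r a c := fun a ha h => hc (mem_biUnion.2 ⟨a, ha, mem_filter.2 ⟨hcU, h⟩⟩)
    have hcF : c ∉ F := fun h => hcr c h (hrefl c hcU)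
    refine ⟨insert c F, insert_subset hcU hFU, by rw [card_insert_of_notMem hcF, hFn], ?_⟩
    rw [coe_insert]
    exact hF.insert fun a ha _ => ⟨fun h => hcr a ha (hsymm c a h), hcr a ha⟩

lemma mul_choose_mul_choose_lt {m s n : ℕ} (hs : 15 * s ≤ m + 1) (hn : n ^ 2 < 2 ^ s) :
    n * (s.choose (s / 2 + 1) * m.choose (s - (s / 2 + 1))) < m.choose s := by
  obtain rfl | hs1 := s.eq_zero_or_pos
  · simp_all
  set k := s / 2 + 1
  have hpow : n * 2 ^ s < 14 ^ k := by
    refine lt_of_pow_lt_pow_left₀ 2 (Nat.zero_le _) ?_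
    calc (n * 2 ^ s) ^ 2 = n ^ 2 * 4 ^ s := by rw [mul_pow, ← pow_mul, mul_comm s, pow_mul]; rfl
      _ < 2 ^ s * 4 ^ s := Nat.mul_lt_mul_of_pos_right hn (by positivity)
      _ = 8 ^ s := by rw [← mul_pow]; norm_num
      _ ≤ 14 ^ s := Nat.pow_le_pow_left (by norm_num) s
      _ ≤ (14 ^ k) ^ 2 := by rw [← pow_mul]; exact Nat.pow_le_pow_right (by norm_num) (by omega)
  have hgrow := choose_mul_pow_le_choose_add (m := m) (i := s - k) (j := k) (by omega)
  rw [Nat.sub_add_cancel (by omega)] at hgrow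
  calc n * (s.choose k * m.choose (s - k)) ≤ n * 2 ^ s * m.choose (s - k) := by
        rw [← mul_assoc]; gcongr; exact Nat.choose_le_two_pow s k
    _ < 14 ^ k * m.choose (s - k) := Nat.mul_lt_mul_of_pos_right hpow (Nat.choose_pos (by omega))
    _ ≤ m.choose s := by rw [mul_comm]; exact hgrow

lemma exists_family_card_inter_le {m s n : ℕ} (hs : 15 * s ≤ m + 1) (hn : n ^ 2 < 2 ^ s) :
    ∃ SS : Fin n → Finset (Fin m), (∀ w, #(SS w) = s) ∧
      Pairwise fun w w' => 2 * #(SS w ∩ SS w') ≤ s := by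
  obtain rfl | hs1 := s.eq_zero_or_pos
  · obtain rfl : n = 0 := by simpa using hn
    exact ⟨Fin.elim0, fun w => w.elim0, fun w => w.elim0⟩
  have hbad : ∀ S ∈ powersetCard s (univ : Finset (Fin m)),
      #{T ∈ powersetCard s univ | s < 2 * #(S ∩ T)} ≤
        s.choose (s / 2 + 1) * m.choose (s - (s / 2 + 1)) := by
    intro S hS
    have h := card_filter_le_card_inter_le S s (s / 2 + 1)
    rw [(mem_powersetCard.1 hS).2, Fintype.card_fin] at h
    convert h using 3 with T
    omega
  obtain ⟨F, hFU, hFn, hF⟩ := exists_subset_card_eq_pairwise_not (powersetCard s univ)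
    (fun S T => s < 2 * #(S ∩ T)) (fun S T h => by rwa [inter_comm])
    (fun S hS => by rw [inter_self, (mem_powersetCard.1 hS).2]; omega) hbad
    (by rw [card_powersetCard, card_univ, Fintype.card_fin]; exact mul_choose_mul_choose_lt hs hn)
  set e := F.equivFinOfCardEq hFn
  refine ⟨fun w => e.symm w, fun w => (mem_powersetCard.1 (hFU (e.symm w).2)).2, fun w w' h => ?_⟩
  exact not_lt.1 (hF (e.symm w).2 (e.symm w').2 (Subtype.val_injective.ne (e.symm.injective.ne h)))

end SetFamily

section EmpiricalMeasure

open scoped ENNReal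

variable {ι α : Type*} [Fintype ι] [MeasurableSpace α]

noncomputable def empiricalMeasure (pts : ι → α) : Measure α :=
  (Fintype.card ι : ℝ≥0∞)⁻¹ • ∑ i, Measure.dirac (pts i)

lemma empiricalMeasure_apply [MeasurableSingletonClass α] (pts : ι → α) (s : Set α) :
    empiricalMeasure pts s = (Fintype.card ι : ℝ≥0∞)⁻¹ * ∑ i, s.indicator 1 (pts i) := by
  simp [empiricalMeasure, Measure.finsetSum_apply, Measure.dirac_apply]

lemma empiricalMeasure_eq_one [Nonempty ι] (pts : ι → α) {s : Set α} (h : ∀ i, pts i ∈ s) :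
    empiricalMeasure pts s = 1 := by
  simp only [empiricalMeasure, Measure.smul_apply, Measure.finsetSum_apply,
    Measure.dirac_apply_of_mem (h _), Finset.sum_const, Finset.card_univ, nsmul_eq_mul, mul_one,
    smul_eq_mul]
  exact ENNReal.inv_mul_cancel (by simp) (by simp)

lemma isProbabilityMeasure_empiricalMeasure [Nonempty ι] (pts : ι → α) :
    IsProbabilityMeasure (empiricalMeasure pts) :=
  ⟨empiricalMeasure_eq_one pts fun _ => Set.mem_univ _⟩

instance isFiniteMeasure_empiricalMeasure (pts : ι → α) :
    IsFiniteMeasure (empiricalMeasure pts) := by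
  cases isEmpty_or_nonempty ι
  · simp [empiricalMeasure]; infer_instance
  · have := isProbabilityMeasure_empiricalMeasure pts; infer_instance

lemma integral_empiricalMeasure [MeasurableSingletonClass α] (pts : ι → α) (f : α → ℝ) :
    ∫ x, f x ∂empiricalMeasure pts = (Fintype.card ι : ℝ)⁻¹ * ∑ i, f (pts i) := by
  rw [empiricalMeasure, integral_smul_measure,
    integral_finsetSum_measure fun i _ => integrable_dirac (by simp)]
  simp [integral_dirac]

lemma pi_empiricalMeasure [MeasurableSingletonClass α] {τ : Type*} [Fintype τ] [DecidableEq τ]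
    (pts : ι → α) :
    Measure.pi (fun _ : τ => empiricalMeasure pts) =
      empiricalMeasure fun ω : τ → ι => fun j => pts (ω j) := by
  refine Measure.pi_eq fun s _ => ?_
  simp only [empiricalMeasure_apply, Finset.prod_mul_distrib, Finset.prod_const, Finset.card_univ,
    Fintype.card_fun, Nat.cast_pow, ENNReal.inv_pow]
  rw [Finset.prod_univ_sum, Fintype.piFinset_univ]
  congr 1
  refine Finset.sum_congr rfl fun ω _ => ?_
  classical
  simp [Set.indicator_apply, Finset.prod_boole]

end EmpiricalMeasure

section ProductWeight

open Function

variable {ι κ : Type*} [Fintype ι] (q : κ → ℝ)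

def piWeight (σ : ι → κ) : ℝ := ∏ j, q (σ j)

lemma sum_piWeight [Fintype κ] [DecidableEq ι] (hq : ∑ i, q i = 1) :
    ∑ σ : ι → κ, piWeight q σ = 1 := by
  simp [piWeight, ← Fintype.piFinset_univ, ← Finset.prod_univ_sum, hq]

lemma piWeight_update_mul [DecidableEq ι] (σ : ι → κ) (w : ι) (i : κ) :
    piWeight q (update σ w i) * q (σ w) = q i * piWeight q σ := by
  simp only [piWeight, ← Finset.mul_prod_erase Finset.univ _ (Finset.mem_univ w), update_self]
  rw [Finset.prod_congr rfl fun j hj => by rw [update_of_ne (Finset.ne_of_mem_erase hj)]]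
  ring

/-- If `Φ σ` ignores `σ w`, evaluating it at `σ w` or at an independent fresh sample has the
same expectation. -/
lemma sum_piWeight_mul_resample [Fintype κ] [DecidableEq ι] (hq : ∑ i, q i = 1) (w : ι)
    (Φ : (ι → κ) → κ → ℝ) (hΦ : ∀ σ i, Φ (update σ w i) = Φ σ) :
    ∑ σ, piWeight q σ * Φ σ (σ w) = ∑ σ, piWeight q σ * ∑ i, q i * Φ σ i := by
  let e : (ι → κ) × κ ≃ (ι → κ) × κ :=
    { toFun := fun p => (update p.1 w p.2, p.1 w)
      invFun := fun p => (update p.1 w p.2, p.1 w)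
      left_inv := fun p => by simp
      right_inv := fun p => by simp }
  let f : (ι → κ) × κ → ℝ := fun p => q p.2 * (piWeight q p.1 * Φ p.1 (p.1 w))
  have hfe : ∀ p, f (e p) = q p.2 * (piWeight q p.1 * Φ p.1 p.2) := fun ⟨σ, i⟩ => by
    simp only [f, e, Equiv.coe_fn_mk, update_self, hΦ]
    rw [← mul_assoc, mul_comm (q (σ w)), piWeight_update_mul]
    ring
  calc ∑ σ, piWeight q σ * Φ σ (σ w) = ∑ p, f p := by
        simp [f, Fintype.sum_prod_type, ← Finset.sum_mul, hq]
    _ = ∑ p, f (e p) := (e.sum_comp f).symm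
    _ = ∑ σ, piWeight q σ * ∑ i, q i * Φ σ i := by
        simp only [hfe, Fintype.sum_prod_type, Finset.mul_sum]
        exact Finset.sum_congr rfl fun σ _ => Finset.sum_congr rfl fun i _ => by ring

lemma sum_piWeight_mul_le [Fintype κ] [DecidableEq ι] (hq0 : ∀ i, 0 ≤ q i) (hq : ∑ i, q i = 1)
    {f : (ι → κ) → ℝ} {C : ℝ} (hf : ∀ σ, f σ ≤ C) : ∑ σ, piWeight q σ * f σ ≤ C :=
  calc ∑ σ, piWeight q σ * f σ ≤ ∑ σ, piWeight q σ * C :=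
        Finset.sum_le_sum fun σ _ =>
          mul_le_mul_of_nonneg_left (hf σ) (Finset.prod_nonneg fun j _ => hq0 _)
    _ = C := by rw [← Finset.sum_mul, sum_piWeight q hq, one_mul]

lemma sum_piWeight_mul_apply [Fintype κ] [DecidableEq ι] (hq : ∑ i, q i = 1) (w : ι)
    (g : κ → ℝ) : ∑ σ, piWeight q σ * g (σ w) = ∑ i, q i * g i := by
  rw [sum_piWeight_mul_resample q hq w (fun _ => g) fun _ _ => rfl, ← Finset.sum_mul,
    sum_piWeight q hq, one_mul]

end ProductWeight

section Menus

variable {m : ℕ}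

def optimalPrices (M : Finset (Entry m)) (v : Fin m → ℝ) : Set ℝ :=
  Prod.snd '' {e | e ∈ M ∧ ∀ e' ∈ M, utility v e' ≤ utility v e}

/-- A revenue-maximizing selection rule breaks the buyer's ties in favour of the highest price;
this is the price it charges. -/
noncomputable def maxPrice (M : Finset (Entry m)) (v : Fin m → ℝ) : ℝ :=
  sSup (optimalPrices M v)

lemma optimalPrices_finite (M : Finset (Entry m)) (v : Fin m → ℝ) :
    (optimalPrices M v).Finite :=
  (M.finite_toSet.subset fun _ h => h.1).image _

lemma le_maxPrice {M : Finset (Entry m)} {v : Fin m → ℝ} {e : Entry m} (he : e ∈ M)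
    (hopt : ∀ e' ∈ M, utility v e' ≤ utility v e) : e.2 ≤ maxPrice M v :=
  le_csSup (optimalPrices_finite M v).bddAbove ⟨e, ⟨he, hopt⟩, rfl⟩

lemma exists_price_eq_maxPrice {M : Finset (Entry m)} (hM : M.Nonempty) (v : Fin m → ℝ) :
    ∃ e ∈ M, (∀ e' ∈ M, utility v e' ≤ utility v e) ∧ e.2 = maxPrice M v := by
  obtain ⟨e, he, hopt⟩ := M.exists_max_image (utility v) hM
  have hne : (optimalPrices M v).Nonempty := ⟨e.2, e, ⟨he, hopt⟩, rfl⟩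
  obtain ⟨e, ⟨he, hopt⟩, hp⟩ := hne.csSup_mem (optimalPrices_finite M v)
  exact ⟨e, he, hopt, hp⟩

lemma exists_isSelection_price_eq_maxPrice {M : Finset (Entry m)} (hM : M.Nonempty) :
    ∃ s, IsSelection M s ∧ ∀ v, (s v).2 = maxPrice M v := by
  choose s hsM hopt hp using exists_price_eq_maxPrice hM
  exact ⟨s, fun v => ⟨hsM v, hopt v⟩, hp⟩

lemma rev_empiricalMeasure {ι : Type*} [Fintype ι] {M : Finset (Entry m)} (hM : M.Nonempty)
    (pts : ι → Fin m → ℝ) :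
    Rev (empiricalMeasure pts) M = (Fintype.card ι : ℝ)⁻¹ * ∑ i, maxPrice M (pts i) := by
  have hle : ∀ s, IsSelection M s →
      revSel (empiricalMeasure pts) s ≤ (Fintype.card ι : ℝ)⁻¹ * ∑ i, maxPrice M (pts i) := by
    intro s hs
    rw [revSel, integral_empiricalMeasure]
    gcongr with i
    exact le_maxPrice (hs _).1 (hs _).2
  obtain ⟨s, hs, hsp⟩ := exists_isSelection_price_eq_maxPrice hM
  have hrev :
      revSel (empiricalMeasure pts) s = (Fintype.card ι : ℝ)⁻¹ * ∑ i, maxPrice M (pts i) := by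
    simp [revSel, integral_empiricalMeasure, hsp]
  have hbound : (Fintype.card ι : ℝ)⁻¹ * ∑ i, maxPrice M (pts i) ∈
      upperBounds {r | ∃ s, IsSelection M s ∧ r = revSel (empiricalMeasure pts) s} := by
    rintro _ ⟨s', hs', rfl⟩; exact hle s' hs'
  exact le_antisymm (csSup_le ⟨_, s, hs, rfl⟩ hbound) (le_csSup ⟨_, hbound⟩ ⟨s, hs, hrev.symm⟩)

end Menus

section LevelValuations

open Finset

variable {m : ℕ}

noncomputable def levelValuation (S : Finset (Fin m)) (ℓ : ℕ) : Fin m → ℝ :=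
  fun j => if j ∈ S then 2 ^ ℓ else 1

lemma utility_levelValuation (S : Finset (Fin m)) (ℓ : ℕ) (e : Entry m) :
    utility (levelValuation S ℓ) e = (2 ^ ℓ - 1) * ∑ j ∈ S, e.1 j + ∑ j, e.1 j - e.2 := by
  have h : ∀ j,
      levelValuation S ℓ j * e.1 j = (if j ∈ S then (2 ^ ℓ - 1) * e.1 j else 0) + e.1 j :=
    fun j => by by_cases hj : j ∈ S <;> simp [levelValuation, hj]; ring
  simp only [utility, h, sum_add_distrib, sum_ite_mem, univ_inter, mul_sum]

lemma IsMenu.sum_le {M : Finset (Entry m)} (hM : IsMenu m M) {e : Entry m} (he : e ∈ M)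
    (S : Finset (Fin m)) :
    0 ≤ ∑ j ∈ S, e.1 j ∧ ∑ j ∈ S, e.1 j ≤ ∑ j, e.1 j ∧ ∑ j, e.1 j ≤ 1 := by
  obtain ⟨hpos, htot⟩ := hM.2 e he
  exact ⟨sum_nonneg fun j _ => hpos j,
    sum_le_sum_of_subset_of_nonneg (subset_univ S) fun j _ _ => hpos j, htot⟩

lemma IsMenu.utility_nonneg {M : Finset (Entry m)} (hM : IsMenu m M) {v : Fin m → ℝ}
    {e : Entry m} (hopt : ∀ e' ∈ M, utility v e' ≤ utility v e) : 0 ≤ utility v e :=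
  le_of_eq_of_le (by simp [utility]) (hopt _ hM.1)

lemma IsMenu.price_add_utility_le {M : Finset (Entry m)} (hM : IsMenu m M) {e : Entry m}
    (he : e ∈ M) (S : Finset (Fin m)) (ℓ : ℕ) :
    e.2 + utility (levelValuation S ℓ) e ≤ 2 ^ ℓ * ∑ j ∈ S, e.1 j + 1 := by
  obtain ⟨hX0, -, hT1⟩ := hM.sum_le he S
  rw [utility_levelValuation]
  linarith

lemma maxPrice_levelValuation_le {M : Finset (Entry m)} (hM : IsMenu m M) (S : Finset (Fin m))
    (ℓ : ℕ) : maxPrice M (levelValuation S ℓ) ≤ 2 ^ ℓ := by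
  obtain ⟨e, he, hopt, hp⟩ := exists_price_eq_maxPrice ⟨_, hM.1⟩ (levelValuation S ℓ)
  have hu := hM.utility_nonneg hopt
  rw [utility_levelValuation] at hu
  obtain ⟨hX0, hXT, hT1⟩ := hM.sum_le he S
  have : (1 : ℝ) ≤ 2 ^ ℓ := one_le_pow₀ one_le_two
  rw [← hp]
  nlinarith

lemma sum_inv_two_pow_mul_maxPrice_le {M : Finset (Entry m)} (hM : IsMenu m M)
    (S : Finset (Fin m)) (I : Finset ℕ) :
    ∑ ℓ ∈ I, ((2 : ℝ) ^ ℓ)⁻¹ * maxPrice M (levelValuation S ℓ) ≤ 6 := by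
  choose E hEM hEopt hEp using fun ℓ => exists_price_eq_maxPrice ⟨_, hM.1⟩ (levelValuation S ℓ)
  set X : ℕ → ℝ := fun ℓ => ∑ j ∈ S, (E ℓ).1 j
  set u : ℕ → ℝ := fun ℓ => utility (levelValuation S ℓ) (E ℓ)
  set G := I.filter fun ℓ => 0 ≤ maxPrice M (levelValuation S ℓ)
  have hpu : ∀ ℓ, maxPrice M (levelValuation S ℓ) + u ℓ ≤ 2 ^ ℓ * X ℓ + 1 := fun ℓ =>
    hEp ℓ ▸ hM.price_add_utility_le (hEM ℓ) S ℓ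
  have hu : ∀ ℓ ∈ G, 0 ≤ u ℓ := fun ℓ _ => hM.utility_nonneg (hEopt ℓ)
  have hX : ∀ ℓ ∈ G, X ℓ ≤ 1 := fun ℓ _ => by
    obtain ⟨-, hXT, hT1⟩ := hM.sum_le (hEM ℓ) S; linarith
  have huX : ∀ ℓ ∈ G, u ℓ ≤ 2 ^ ℓ * X ℓ + 1 := fun ℓ hℓ => by
    linarith [hpu ℓ, (mem_filter.1 hℓ).2]
  have hchain : ∀ a ∈ G, ∀ b ∈ G, b < a → u b + (2 ^ a - 2 ^ b) * X b ≤ u a :=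
    fun a _ b _ _ => by
      have := hEopt a (E b) (hEM b)
      simp only [u, X, utility_levelValuation] at this ⊢
      linarith
  have hterm : ∀ ℓ ∈ G, ((2 : ℝ) ^ ℓ)⁻¹ * maxPrice M (levelValuation S ℓ) ≤
      (X ℓ - u ℓ / 2 ^ ℓ) + (2 ^ ℓ)⁻¹ := fun ℓ _ => by
    have h2 : (0 : ℝ) < 2 ^ ℓ := by positivity
    rw [inv_mul_le_iff₀ h2, mul_add, mul_sub, mul_div_cancel₀ _ h2.ne', mul_inv_cancel₀ h2.ne']
    linarith [hpu ℓ]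
  calc ∑ ℓ ∈ I, ((2 : ℝ) ^ ℓ)⁻¹ * maxPrice M (levelValuation S ℓ)
      ≤ ∑ ℓ ∈ G, ((2 : ℝ) ^ ℓ)⁻¹ * maxPrice M (levelValuation S ℓ) :=
        sum_le_sum_filter_of_nonpos fun ℓ _ h =>
          mul_nonpos_of_nonneg_of_nonpos (by positivity) (not_le.1 h).le
    _ ≤ ∑ ℓ ∈ G, (X ℓ - u ℓ / 2 ^ ℓ) + ∑ ℓ ∈ G, ((2 : ℝ) ^ ℓ)⁻¹ := by
        rw [← sum_add_distrib]; exact sum_le_sum hterm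
    _ ≤ 6 := by
        linarith [sum_sub_div_two_pow_le hu hX huX hchain, sum_inv_two_pow_le G]

end LevelValuations

section HardDistribution

open Finset

variable {m : ℕ}

noncomputable def uniformLottery (S : Finset (Fin m)) : Fin m → ℝ :=
  fun j => if j ∈ S then (#S : ℝ)⁻¹ else 0

lemma sum_uniformLottery (S T : Finset (Fin m)) :
    ∑ j ∈ T, uniformLottery S j = #(S ∩ T) / #S := by
  simp [uniformLottery, inter_comm, div_eq_mul_inv]

lemma isLottery_uniformLottery (S : Finset (Fin m)) : IsLottery m (uniformLottery S) := by
  refine ⟨fun j => by unfold uniformLottery; split_ifs <;> positivity, ?_⟩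
  rw [sum_uniformLottery, inter_univ]
  exact div_self_le_one _

lemma utility_levelValuation_uniformLottery (S : Finset (Fin m)) (ℓ : ℕ) {T : Finset (Fin m)}
    (hT : T.Nonempty) (p : ℝ) :
    utility (levelValuation S ℓ) (uniformLottery T, p) =
      (2 ^ ℓ - 1) * (#(T ∩ S) / #T) + 1 - p := by
  rw [utility_levelValuation, sum_uniformLottery, sum_uniformLottery, inter_univ,
    div_self (by simpa using hT.ne_empty)]

lemma utility_levelValuation_uniformLottery_self {S : Finset (Fin m)} (ℓ : ℕ)
    (hS : S.Nonempty) : utility (levelValuation S ℓ) (uniformLottery S, 2 ^ ℓ / 2) = 2 ^ ℓ / 2 := by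
  rw [utility_levelValuation_uniformLottery _ _ hS, inter_self,
    div_self (by simpa using hS.ne_empty)]
  ring

lemma utility_levelValuation_uniformLottery_le {S T : Finset (Fin m)} (hT : T.Nonempty)
    (hST : 2 * #(T ∩ S) ≤ #T) (ℓ ℓ' : ℕ) :
    utility (levelValuation S ℓ) (uniformLottery T, 2 ^ ℓ' / 2) ≤ 2 ^ ℓ / 2 := by
  have h1 : (1 : ℝ) ≤ 2 ^ ℓ := one_le_pow₀ one_le_two
  have h1' : (1 : ℝ) ≤ 2 ^ ℓ' := one_le_pow₀ one_le_two
  have hr : (#(T ∩ S) : ℝ) / #T ≤ 1 / 2 := by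
    rw [div_le_div_iff₀ (by simpa using hT) two_pos]
    exact_mod_cast (by linarith : #(T ∩ S) * 2 ≤ 1 * #T)
  have hr0 : (0 : ℝ) ≤ #(T ∩ S) / #T := by positivity
  rw [utility_levelValuation_uniformLottery _ _ hT]
  nlinarith

noncomputable def levelMeasure {ι : Type*} [Fintype ι] (SS : ι → Finset (Fin m)) (σ : ι → ℕ) :
    Measure (Fin m → ℝ) :=
  empiricalMeasure fun w => levelValuation (SS w) (σ w)

lemma rev_levelMeasure_le {ι : Type*} [Fintype ι] {M : Finset (Entry m)} (hM : IsMenu m M)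
    (SS : ι → Finset (Fin m)) (σ : ι → ℕ) :
    Rev (levelMeasure SS σ) M ≤ (Fintype.card ι : ℝ)⁻¹ * ∑ w, (2 : ℝ) ^ σ w := by
  rw [levelMeasure, rev_empiricalMeasure ⟨_, hM.1⟩]
  gcongr with w
  exact maxPrice_levelValuation_le hM _ _

lemma sum_two_pow_div_two_le_opt {ι : Type*} [Fintype ι] {s : ℕ} (hs : 0 < s)
    (SS : ι → Finset (Fin m)) (hcard : ∀ w, #(SS w) = s)
    (hpair : Pairwise fun w w' => 2 * #(SS w ∩ SS w') ≤ s) (σ : ι → ℕ) :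
    (Fintype.card ι : ℝ)⁻¹ * ∑ w, (2 : ℝ) ^ σ w / 2 ≤ OPT (levelMeasure SS σ) := by
  have hne : ∀ w, (SS w).Nonempty := fun w => card_pos.1 (hcard w ▸ hs)
  set own : ι → Entry m := fun w => (uniformLottery (SS w), 2 ^ σ w / 2)
  set M₀ : Finset (Entry m) := insert 0 (univ.image own)
  have hM₀ : IsMenu m M₀ := by
    refine ⟨mem_insert_self _ _, fun e he => ?_⟩
    rcases mem_insert.1 he with rfl | he
    · exact ⟨fun _ => le_rfl, by simp⟩
    · obtain ⟨w, -, rfl⟩ := mem_image.1 he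
      exact isLottery_uniformLottery _
  have hown : ∀ w ∈ univ, own w ∈ M₀ := fun w _ =>
    mem_insert_of_mem (mem_image_of_mem own (mem_univ w))
  have hopt : ∀ w, ∀ e ∈ M₀, utility (levelValuation (SS w) (σ w)) e ≤
      utility (levelValuation (SS w) (σ w)) (own w) := by
    intro w e he
    rw [utility_levelValuation_uniformLottery_self _ (hne w)]
    rcases mem_insert.1 he with rfl | he
    · simp [utility]; positivity
    obtain ⟨w', -, rfl⟩ := mem_image.1 he
    rcases eq_or_ne w' w with rfl | hw
    · rw [utility_levelValuation_uniformLottery_self _ (hne w')]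
    · exact utility_levelValuation_uniformLottery_le (hne w') (by rw [hcard]; exact hpair hw) _ _
  have hbound : (Fintype.card ι : ℝ)⁻¹ * ∑ w, (2 : ℝ) ^ σ w ∈
      upperBounds {r | ∃ M : Finset (Entry m), IsMenu m M ∧ r = Rev (levelMeasure SS σ) M} := by
    rintro _ ⟨M, hM, rfl⟩
    exact rev_levelMeasure_le hM SS σ
  calc (Fintype.card ι : ℝ)⁻¹ * ∑ w, (2 : ℝ) ^ σ w / 2
      ≤ (Fintype.card ι : ℝ)⁻¹ * ∑ w, maxPrice M₀ (levelValuation (SS w) (σ w)) := by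
        gcongr with w hw
        exact le_maxPrice (hown w hw) (hopt w)
    _ = Rev (levelMeasure SS σ) M₀ := (rev_empiricalMeasure ⟨_, hM₀.1⟩ _).symm
    _ ≤ OPT (levelMeasure SS σ) := le_csSup ⟨_, hbound⟩ ⟨M₀, hM₀, rfl⟩

end HardDistribution

section Prior

open Finset

variable {m : ℕ}

noncomputable def levelWeight (L : ℕ) (i : Fin (L + 1)) : ℝ :=
  (2 ^ (i : ℕ))⁻¹ / ∑ j : Fin (L + 1), ((2 : ℝ) ^ (j : ℕ))⁻¹

lemma one_le_sum_inv_two_pow (L : ℕ) : 1 ≤ ∑ j : Fin (L + 1), ((2 : ℝ) ^ (j : ℕ))⁻¹ := by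
  simpa using single_le_sum (f := fun j : Fin (L + 1) => ((2 : ℝ) ^ (j : ℕ))⁻¹)
    (fun j _ => by positivity) (mem_univ 0)

lemma sum_inv_two_pow_fin_le (L : ℕ) : ∑ j : Fin (L + 1), ((2 : ℝ) ^ (j : ℕ))⁻¹ ≤ 2 := by
  rw [Fin.sum_univ_eq_sum_range (fun j => ((2 : ℝ) ^ j)⁻¹)]
  exact sum_inv_two_pow_le _

lemma levelWeight_pos (L : ℕ) (i : Fin (L + 1)) : 0 < levelWeight L i :=
  div_pos (by positivity) (one_pos.trans_le (one_le_sum_inv_two_pow L))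

lemma sum_levelWeight (L : ℕ) : ∑ i, levelWeight L i = 1 := by
  simp only [levelWeight, ← sum_div]
  exact div_self (one_pos.trans_le (one_le_sum_inv_two_pow L)).ne'

lemma levelWeight_mul_two_pow (L : ℕ) (i : Fin (L + 1)) :
    levelWeight L i * 2 ^ (i : ℕ) = (∑ j : Fin (L + 1), ((2 : ℝ) ^ (j : ℕ))⁻¹)⁻¹ := by
  rw [levelWeight, div_mul_eq_mul_div, inv_mul_cancel₀ (by positivity), one_div]

lemma sum_levelWeight_mul_maxPrice_le {M : Finset (Entry m)} (hM : IsMenu m M)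
    (S : Finset (Fin m)) (L : ℕ) :
    ∑ i, levelWeight L i * maxPrice M (levelValuation S i) ≤ 6 := by
  have hsum : ∑ i, levelWeight L i * maxPrice M (levelValuation S i) =
      (∑ j : Fin (L + 1), ((2 : ℝ) ^ (j : ℕ))⁻¹)⁻¹ *
        ∑ ℓ ∈ range (L + 1), ((2 : ℝ) ^ ℓ)⁻¹ * maxPrice M (levelValuation S ℓ) := by
    rw [← Fin.sum_univ_eq_sum_range (fun ℓ => ((2 : ℝ) ^ ℓ)⁻¹ * maxPrice M (levelValuation S ℓ)),
      mul_sum]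
    exact sum_congr rfl fun i _ => by rw [levelWeight]; ring
  rw [hsum]
  calc _ ≤ (∑ j : Fin (L + 1), ((2 : ℝ) ^ (j : ℕ))⁻¹)⁻¹ * 6 := by
        gcongr; exact sum_inv_two_pow_mul_maxPrice_le hM S _
    _ ≤ 6 := mul_le_of_le_one_left (by norm_num) (inv_le_one_of_one_le₀ (one_le_sum_inv_two_pow L))

end Prior

section Yao

open Finset Function

variable {m t H L : ℕ} {ι : Type*} [Fintype ι]

lemma integral_rev_levelMeasure (SS : ι → Finset (Fin m)) (σ : ι → ℕ)
    (A : (Fin t → Fin m → ℝ) → Finset (Entry m)) (hA : ∀ vs, IsMenu m (A vs)) :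
    ∫ vs, Rev (levelMeasure SS σ) (A vs) ∂(Measure.pi fun _ : Fin t => levelMeasure SS σ) =
      (Fintype.card (Fin t → ι) : ℝ)⁻¹ * ∑ ω : Fin t → ι, (Fintype.card ι : ℝ)⁻¹ * ∑ w,
        maxPrice (A fun j => levelValuation (SS (ω j)) (σ (ω j)))
          (levelValuation (SS w) (σ w)) := by
  rw [levelMeasure, pi_empiricalMeasure, integral_empiricalMeasure]
  simp_rw [rev_empiricalMeasure ⟨_, (hA _).1⟩]

lemma sum_sum_piWeight_mul_maxPrice_le [DecidableEq ι] (SS : ι → Finset (Fin m))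
    (hLH : 2 ^ L ≤ H) (hι : t * H ≤ Fintype.card ι) (A : (Fin t → Fin m → ℝ) → Finset (Entry m))
    (hA : ∀ vs, IsMenu m (A vs)) (ω : Fin t → ι) :
    ∑ w, ∑ σ : ι → Fin (L + 1), piWeight (levelWeight L) σ *
      maxPrice (A fun j => levelValuation (SS (ω j)) (σ (ω j))) (levelValuation (SS w) (σ w)) ≤
        7 * Fintype.card ι := by
  have hq0 : ∀ i, 0 ≤ levelWeight L i := fun i => (levelWeight_pos L i).le
  set f : (ι → Fin (L + 1)) → ι → ℝ := fun σ w =>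
    maxPrice (A fun j => levelValuation (SS (ω j)) (σ (ω j))) (levelValuation (SS w) (σ w))
  have hseen : ∀ w, ∑ σ, piWeight (levelWeight L) σ * f σ w ≤ H := fun w =>
    sum_piWeight_mul_le _ hq0 (sum_levelWeight L) fun σ =>
      (maxPrice_levelValuation_le (hA _) _ _).trans <| by
        exact_mod_cast (Nat.pow_le_pow_right two_pos (Nat.lt_succ_iff.1 (σ w).2)).trans hLH
  have hunseen : ∀ w, w ∉ univ.image ω → ∑ σ, piWeight (levelWeight L) σ * f σ w ≤ 6 := by
    intro w hw
    rw [sum_piWeight_mul_resample _ (sum_levelWeight L) w fun σ i =>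
      maxPrice (A fun j => levelValuation (SS (ω j)) (σ (ω j))) (levelValuation (SS w) i)]
    · exact sum_piWeight_mul_le _ hq0 (sum_levelWeight L) fun σ =>
        sum_levelWeight_mul_maxPrice_le (hA _) _ L
    · intro σ i
      have : ∀ j, ω j ≠ w := fun j h => hw (mem_image.2 ⟨j, mem_univ j, h⟩)
      simp [update_of_ne (this _)]
  calc ∑ w, ∑ σ, piWeight (levelWeight L) σ * f σ w
      ≤ ∑ w, ((if w ∈ univ.image ω then (H : ℝ) else 0) + 6) := sum_le_sum fun w _ => by
        split_ifs with h
        · linarith [hseen w]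
        · linarith [hunseen w h]
    _ = #(univ.image ω) * H + 6 * Fintype.card ι := by
        rw [sum_add_distrib, sum_ite_mem, univ_inter, sum_const, sum_const, card_univ]
        simp [mul_comm]
    _ ≤ t * H + 6 * Fintype.card ι := by
        gcongr
        exact_mod_cast card_image_le.trans (by simp)
    _ ≤ 7 * Fintype.card ι := by
        have : (t * H : ℝ) ≤ Fintype.card ι := by exact_mod_cast hι
        linarith

lemma sum_piWeight_mul_integral_rev_le [DecidableEq ι] [Nonempty ι] (SS : ι → Finset (Fin m))
    (hLH : 2 ^ L ≤ H) (hι : t * H ≤ Fintype.card ι) (A : (Fin t → Fin m → ℝ) → Finset (Entry m))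
    (hA : ∀ vs, IsMenu m (A vs)) :
    ∑ σ : ι → Fin (L + 1), piWeight (levelWeight L) σ *
      ∫ vs, Rev (levelMeasure SS fun w => σ w) (A vs)
        ∂(Measure.pi fun _ : Fin t => levelMeasure SS fun w => σ w) ≤ 7 := by
  set N := Fintype.card ι
  set f : (ι → Fin (L + 1)) → (Fin t → ι) → ι → ℝ := fun σ ω w =>
    maxPrice (A fun j => levelValuation (SS (ω j)) (σ (ω j))) (levelValuation (SS w) (σ w))
  have hN : (0 : ℝ) < N := by exact_mod_cast Fintype.card_pos
  simp_rw [integral_rev_levelMeasure SS _ A hA]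
  calc ∑ σ : ι → Fin (L + 1), piWeight (levelWeight L) σ *
        ((Fintype.card (Fin t → ι) : ℝ)⁻¹ * ∑ ω : Fin t → ι, (N : ℝ)⁻¹ * ∑ w, f σ ω w)
      = (Fintype.card (Fin t → ι) : ℝ)⁻¹ * ∑ ω : Fin t → ι,
          (N : ℝ)⁻¹ * ∑ w, ∑ σ, piWeight (levelWeight L) σ * f σ ω w := by
        simp only [mul_sum]
        rw [sum_comm]
        refine sum_congr rfl fun ω _ => ?_
        rw [sum_comm]
        exact sum_congr rfl fun w _ => sum_congr rfl fun σ _ => by ring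
    _ ≤ (Fintype.card (Fin t → ι) : ℝ)⁻¹ * ∑ ω : Fin t → ι, (N : ℝ)⁻¹ * (7 * N) := by
        gcongr with ω
        exact sum_sum_piWeight_mul_maxPrice_le SS hLH hι A hA ω
    _ = 7 := by
        rw [mul_comm 7, inv_mul_cancel_left₀ hN.ne', sum_const, card_univ, nsmul_eq_mul,
          inv_mul_cancel_left₀ (by positivity)]

lemma le_sum_piWeight_mul_sum_two_pow [DecidableEq ι] [Nonempty ι] (L : ℕ) :
    (L + 1 : ℝ) / 4 ≤ ∑ σ : ι → Fin (L + 1), piWeight (levelWeight L) σ *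
      ((Fintype.card ι : ℝ)⁻¹ * ∑ w, (2 : ℝ) ^ (σ w : ℕ) / 2) := by
  have hw : ∀ w : ι,
      ∑ σ : ι → Fin (L + 1), piWeight (levelWeight L) σ * ((2 : ℝ) ^ (σ w : ℕ) / 2) =
        (L + 1) / 2 * (∑ j : Fin (L + 1), ((2 : ℝ) ^ (j : ℕ))⁻¹)⁻¹ := fun w => by
    rw [sum_piWeight_mul_apply _ (sum_levelWeight L) w fun i => (2 : ℝ) ^ (i : ℕ) / 2]
    simp_rw [mul_div_assoc', levelWeight_mul_two_pow]
    simp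
    ring
  have hN : (0 : ℝ) < Fintype.card ι := by exact_mod_cast Fintype.card_pos
  simp_rw [mul_sum, mul_left_comm _ (Fintype.card ι : ℝ)⁻¹]
  rw [sum_comm]
  simp_rw [← mul_sum, hw, sum_const, card_univ, nsmul_eq_mul, inv_mul_cancel_left₀ hN.ne']
  calc (L + 1 : ℝ) / 4 = (L + 1) / 2 * 2⁻¹ := by ring
    _ ≤ _ := by gcongr; exact sum_inv_two_pow_fin_le L

theorem exists_levels_integral_rev_le [DecidableEq ι] [Nonempty ι] (SS : ι → Finset (Fin m))
    (hLH : 2 ^ L ≤ H) (hι : t * H ≤ Fintype.card ι) (A : (Fin t → Fin m → ℝ) → Finset (Entry m))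
    (hA : ∀ vs, IsMenu m (A vs)) :
    ∃ σ : ι → ℕ, (∀ w, σ w ≤ L) ∧
      ∫ vs, Rev (levelMeasure SS σ) (A vs) ∂(Measure.pi fun _ : Fin t => levelMeasure SS σ) ≤
        28 / (L + 1) * ((Fintype.card ι : ℝ)⁻¹ * ∑ w, (2 : ℝ) ^ σ w / 2) := by
  have hE : ∑ σ : ι → Fin (L + 1), piWeight (levelWeight L) σ *
        ∫ vs, Rev (levelMeasure SS fun w => σ w) (A vs)
          ∂(Measure.pi fun _ : Fin t => levelMeasure SS fun w => σ w) ≤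
      ∑ σ : ι → Fin (L + 1), piWeight (levelWeight L) σ *
        (28 / (L + 1) * ((Fintype.card ι : ℝ)⁻¹ * ∑ w, (2 : ℝ) ^ (σ w : ℕ) / 2)) := by
    simp_rw [mul_left_comm _ (28 / ((L : ℝ) + 1)), ← mul_sum]
    calc _ ≤ (7 : ℝ) := sum_piWeight_mul_integral_rev_le SS hLH hι A hA
      _ = 28 / (L + 1) * ((L + 1) / 4) := by field_simp; ring
      _ ≤ _ := by gcongr; exact le_sum_piWeight_mul_sum_two_pow L
  obtain ⟨σ, -, hσ⟩ := exists_le_of_sum_le univ_nonempty hE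
  refine ⟨fun w => σ w, fun w => Nat.lt_succ_iff.1 (σ w).2, le_of_mul_le_mul_left hσ ?_⟩
  exact prod_pos fun w _ => levelWeight_pos L (σ w)

end Yao

lemma levelValuation_eq_natCast {m H ℓ : ℕ} (hH : 1 ≤ H) (hℓ : 2 ^ ℓ ≤ H) (S : Finset (Fin m))
    (j : Fin m) : ∃ k : ℕ, 1 ≤ k ∧ k ≤ H ∧ levelValuation S ℓ j = k := by
  by_cases hj : j ∈ S
  · exact ⟨2 ^ ℓ, Nat.one_le_two_pow, hℓ, by simp [levelValuation, hj]⟩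
  · exact ⟨1, le_rfl, hH, by simp [levelValuation, hj]⟩

lemma four_hundred_lt_of_lt_two_rpow {m H : ℕ} (hH : 2 ≤ H) (hHm : (H : ℝ) < 2 ^ ((m : ℝ) / 400)) :
    400 < m := by
  have : (2 : ℝ) ^ (1 : ℝ) < 2 ^ ((m : ℝ) / 400) := by
    rw [Real.rpow_one]; exact lt_of_le_of_lt (by exact_mod_cast hH) hHm
  rw [Real.rpow_lt_rpow_left_iff one_lt_two, lt_div_iff₀ (by norm_num)] at this
  exact_mod_cast (by linarith : (400 : ℝ) < m)

lemma sq_mul_lt_two_pow {m t H : ℕ} (hm : 18 ≤ m) (ht : (t : ℝ) ≤ 2 ^ ((m : ℝ) / 400))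
    (hH : (H : ℝ) < 2 ^ ((m : ℝ) / 400)) : (t * H) ^ 2 < 2 ^ (m / 16) := by
  set x : ℝ := 2 ^ ((m : ℝ) / 400)
  have hx : 0 < x := by positivity
  have htH : (t * H : ℝ) < x ^ 2 :=
    calc (t * H : ℝ) ≤ x * H := by gcongr
      _ < x * x := by gcongr
      _ = x ^ 2 := (sq x).symm
  have hx4 : x ^ 4 ≤ 2 ^ (m / 16) := by
    rw [← Real.rpow_mul_natCast zero_le_two, ← Real.rpow_natCast]
    refine Real.rpow_le_rpow_of_exponent_le one_le_two ?_
    have : m ≤ 100 * (m / 16) := by omega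
    have : (m : ℝ) ≤ 100 * (m / 16 : ℕ) := by exact_mod_cast this
    push_cast
    linarith
  have : ((t * H : ℕ) : ℝ) ^ 2 < 2 ^ (m / 16) :=
    calc ((t * H : ℕ) : ℝ) ^ 2 < (x ^ 2) ^ 2 := by push_cast; gcongr
      _ = x ^ 4 := by ring
      _ ≤ 2 ^ (m / 16) := hx4
  exact_mod_cast this

/-- **Sample-complexity lower bound.** There is a universal constant `c > 0` such that for
all `m, t ≥ 1` and integer `2 ≤ H < 2^(m/400)` with `t·m·⌈log₂ H⌉ ≤ 2^(m/400)`, every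
deterministic algorithm `A` mapping `t`-tuples of sampled valuations to menus has, for some
distribution `D` on `{1, …, H}^m`, expected revenue (over the i.i.d. sample from `D`) at
most `c · OPT(D) / log₂ H`. -/
theorem sample_complexity_lower_bound :
    ∃ c : ℝ, 0 < c ∧
      ∀ (m t H : ℕ), 1 ≤ m → 1 ≤ t → 2 ≤ H →
        (H : ℝ) < 2 ^ ((m : ℝ) / 400) →
        ((t * m * ⌈Real.logb 2 (H : ℝ)⌉₊ : ℕ) : ℝ) ≤ 2 ^ ((m : ℝ) / 400) →
        ∀ A : (Fin t → (Fin m → ℝ)) → Finset (Entry m), (∀ vs, IsMenu m (A vs)) →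
          ∃ D : Measure (Fin m → ℝ), IsProbabilityMeasure D ∧
            D {v | ∀ j, ∃ k : ℕ, 1 ≤ k ∧ k ≤ H ∧ v j = (k : ℝ)} = 1 ∧
            (∫ vs, Rev D (A vs) ∂(Measure.pi fun _ : Fin t => D)) ≤
              c * OPT D / Real.logb 2 (H : ℝ) := by
  refine ⟨28, by norm_num, fun m t H hm ht hH hHm hsample A hA => ?_⟩
  set L := Nat.log 2 H
  have hLH : 2 ^ L ≤ H := Nat.pow_log_le_self 2 (by omega)
  have hlog : 0 < Real.logb 2 H := Real.logb_pos one_lt_two (by exact_mod_cast hH)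
  have hlogL : Real.logb 2 H ≤ L + 1 := by
    rw [Real.logb_le_iff_le_rpow one_lt_two (by positivity)]
    exact_mod_cast (Nat.lt_pow_succ_log_self one_lt_two H).le
  have hm' := four_hundred_lt_of_lt_two_rpow hH hHm
  have ht' : (t : ℝ) ≤ 2 ^ ((m : ℝ) / 400) := le_trans (by
    exact_mod_cast (Nat.le_mul_of_pos_right t hm).trans
      (Nat.le_mul_of_pos_right _ (Nat.ceil_pos.2 hlog))) hsample
  obtain ⟨SS, hcard, hpair⟩ :=
    exists_family_card_inter_le (m := m) (by omega) (sq_mul_lt_two_pow (by omega) ht' hHm)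
  have : Nonempty (Fin (t * H)) := ⟨⟨0, Nat.mul_pos ht (by omega)⟩⟩
  obtain ⟨σ, hσL, hσ⟩ := exists_levels_integral_rev_le SS hLH (by simp) A hA
  have hOPT := sum_two_pow_div_two_le_opt (by omega) SS hcard hpair σ
  refine ⟨levelMeasure SS σ, isProbabilityMeasure_empiricalMeasure _,
    empiricalMeasure_eq_one _ fun w j => levelValuation_eq_natCast (by omega)
      ((Nat.pow_le_pow_right two_pos (hσL w)).trans hLH) _ j, ?_⟩
  calc _ ≤ 28 / (L + 1) * OPT (levelMeasure SS σ) := hσ.trans (by gcongr)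
    _ ≤ 28 * OPT (levelMeasure SS σ) / Real.logb 2 H := by
        rw [div_mul_eq_mul_div]
        exact div_le_div_of_nonneg_left (by linarith [hOPT.trans' (by positivity)]) hlog hlogL
end

section
/- Let H ≥ 2 be a real number, set K = ⌈log₂ H⌉, and let X be a real random variable with 1 ≤ X ≤ H almost surely. Then there exists an integer k with 0 ≤ k ≤ K such that 2^k · Pr[X ≥ 2^k] ≥ E[X] / (2(K + 1)). -/
/-!
If `2^j ≤ X ≤ 2^(j+1)` then `X ≤ 2 · 2^j`, so `1 ≤ X ≤ 2^(K+1)` gives pointwise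
`X ≤ 2 ∑_{k ≤ K} 2^k · 1[X ≥ 2^k]`. Taking expectations, `E[X] ≤ 2 ∑_{k ≤ K} 2^k Pr[X ≥ 2^k]`,
and the largest of these `K + 1` terms is at least their average.
-/

open MeasureTheory Finset

lemma Real.le_pow_natCeil_logb {b x : ℝ} (hb : 1 < b) (hx : 0 < x) :
    x ≤ b ^ ⌈Real.logb b x⌉₊ := by
  rw [← Real.rpow_natCast, ← Real.logb_le_iff_le_rpow hb hx]
  exact Nat.le_ceil _

lemma le_two_mul_sum_indicator_Ici_two_pow {x : ℝ} (K : ℕ) (h1 : 1 ≤ x) (hK : x ≤ 2 ^ (K + 1)) :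
    x ≤ 2 * ∑ k ∈ range (K + 1), (Set.Ici ((2 : ℝ) ^ k)).indicator (fun _ ↦ (2 : ℝ) ^ k) x := by
  have indicator_nonneg (k : ℕ) :
      0 ≤ (Set.Ici ((2 : ℝ) ^ k)).indicator (fun _ ↦ (2 : ℝ) ^ k) x :=
    Set.indicator_nonneg (fun _ _ ↦ by positivity) x
  induction K with
  | zero =>
    rw [sum_range_one, Set.indicator_of_mem (by simpa using h1)]
    simpa using hK
  | succ K ih =>
    rw [sum_range_succ, mul_add]
    rcases le_or_gt x (2 ^ (K + 1)) with hx | hx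
    · linarith [ih hx, indicator_nonneg (K + 1)]
    · rw [Set.indicator_of_mem (Set.mem_Ici.mpr hx.le)]
      have := sum_nonneg fun k (_ : k ∈ range (K + 1)) ↦ indicator_nonneg k
      linarith [pow_succ (2 : ℝ) (K + 1)]

lemma integral_le_two_mul_sum_two_pow_mul_measureReal {Ω : Type*} [MeasurableSpace Ω]
    {μ : Measure Ω} [IsFiniteMeasure μ] {X : Ω → ℝ} (K : ℕ)
    (hX : ∀ᵐ ω ∂μ, 1 ≤ X ω ∧ X ω ≤ 2 ^ (K + 1)) :
    ∫ ω, X ω ∂μ ≤ 2 * ∑ k ∈ range (K + 1), (2 : ℝ) ^ k * μ.real {ω | (2 : ℝ) ^ k ≤ X ω} := by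
  have rhs_nonneg :
      0 ≤ 2 * ∑ k ∈ range (K + 1), (2 : ℝ) ^ k * μ.real {ω | (2 : ℝ) ^ k ≤ X ω} := by
    positivity
  by_cases hint : Integrable X μ
  swap
  · rwa [integral_undef hint]
  have hlevel (k : ℕ) : NullMeasurableSet {ω | (2 : ℝ) ^ k ≤ X ω} μ :=
    AEStronglyMeasurable.nullMeasurableSet_le aestronglyMeasurable_const
      hint.aestronglyMeasurable
  have hlevel_integrable (k : ℕ) :
      Integrable (fun ω ↦ {ω | (2 : ℝ) ^ k ≤ X ω}.indicator (fun _ ↦ (2 : ℝ) ^ k) ω) μ :=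
    (integrable_const _).indicator₀ (hlevel k)
  calc ∫ ω, X ω ∂μ
      ≤ ∫ ω, 2 * ∑ k ∈ range (K + 1),
          {ω | (2 : ℝ) ^ k ≤ X ω}.indicator (fun _ ↦ (2 : ℝ) ^ k) ω ∂μ := by
        refine integral_mono_ae hint ((integrable_finsetSum _ fun k _ ↦ hlevel_integrable k).const_mul 2) ?_
        filter_upwards [hX] with ω ⟨h1, hK⟩
        exact le_two_mul_sum_indicator_Ici_two_pow K h1 hK
    _ = 2 * ∑ k ∈ range (K + 1), (2 : ℝ) ^ k * μ.real {ω | (2 : ℝ) ^ k ≤ X ω} := by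
        rw [integral_const_mul, integral_finsetSum _ fun k _ ↦ hlevel_integrable k]
        congr 1
        refine sum_congr rfl fun k _ ↦ ?_
        rw [integral_indicator₀ (hlevel k), setIntegral_const, smul_eq_mul, mul_comm]

lemma Finset.exists_div_card_le_of_le_sum {ι : Type*} {s : Finset ι} (hs : s.Nonempty)
    {f : ι → ℝ} {c : ℝ} (h : c ≤ ∑ i ∈ s, f i) : ∃ i ∈ s, c / #s ≤ f i := by
  refine exists_le_of_sum_le hs ?_
  rwa [sum_const, nsmul_eq_mul, mul_div_cancel₀ _ (by exact_mod_cast hs.card_pos.ne')]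

theorem dyadic_level_selection_general
    {Ω : Type*} [MeasurableSpace Ω] (μ : Measure Ω) [IsProbabilityMeasure μ]
    (H : ℝ) (X : Ω → ℝ)
    (hX : ∀ᵐ ω ∂μ, 1 ≤ X ω ∧ X ω ≤ H) :
    ∃ k : ℕ, k ≤ ⌈Real.logb 2 H⌉₊ ∧
      (∫ ω, X ω ∂μ) / (2 * ((⌈Real.logb 2 H⌉₊ : ℝ) + 1)) ≤
        (2 : ℝ) ^ k * (μ {ω | (2 : ℝ) ^ k ≤ X ω}).toReal := by
  set K := ⌈Real.logb 2 H⌉₊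
  have hXK : ∀ᵐ ω ∂μ, 1 ≤ X ω ∧ X ω ≤ 2 ^ (K + 1) := by
    filter_upwards [hX] with ω ⟨h1, hH⟩
    refine ⟨h1, hH.trans ((Real.le_pow_natCeil_logb one_lt_two (by linarith)).trans ?_)⟩
    exact pow_le_pow_right₀ one_le_two K.le_succ
  have hmean := integral_le_two_mul_sum_two_pow_mul_measureReal K hXK
  obtain ⟨k, hk, hle⟩ := exists_div_card_le_of_le_sum nonempty_range_add_one
    (div_le_iff₀' two_pos |>.mpr hmean)
  refine ⟨k, Nat.lt_succ_iff.mp (mem_range.mp hk), ?_⟩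
  rwa [card_range, div_div, Nat.cast_add_one] at hle

/-- **Dyadic level-selection lemma.** If `1 ≤ X ≤ H` almost surely with `H ≥ 2` and
`K = ⌈log₂ H⌉`, then some power-of-two threshold `2^k` with `0 ≤ k ≤ K` satisfies
`2^k · Pr[X ≥ 2^k] ≥ E[X] / (2(K + 1))`. -/
theorem dyadic_level_selection
    {Ω : Type*} [MeasurableSpace Ω] (μ : Measure Ω) [IsProbabilityMeasure μ]
    (H : ℝ) (hH : 2 ≤ H) (X : Ω → ℝ)
    (hX : ∀ᵐ ω ∂μ, 1 ≤ X ω ∧ X ω ≤ H) :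
    ∃ k : ℕ, k ≤ ⌈Real.logb 2 H⌉₊ ∧
      (∫ ω, X ω ∂μ) / (2 * ((⌈Real.logb 2 H⌉₊ : ℝ) + 1)) ≤
        (2 : ℝ) ^ k * (μ {ω | (2 : ℝ) ^ k ≤ X ω}).toReal :=
  dyadic_level_selection_general μ H X hX
end
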